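/- arXiv:1602.03076 — 9 statements merged into one kernel-verified Lean document; each statement's English description precedes it below -/
import Mathlib

section
/- Let ζ be a standard complex Gaussian random variable. For every t > 0, E[log|1 + ζ/t|] > e^{-t²}/(2(t²+1)). -/
/-!
The Gaussian weight is radial, so in polar coordinates the expectation is
`∫₀^∞ 2 r e^{-r²} A(r) dr`, where `A(r)` is the mean of `log |1 + z/t|` over the circle `|z| = r`.
By Jensen's formula `A(r) = log⁺ (r/t)`, leaving `∫_t^∞ 2 r e^{-r²} log (r/t) dr`. Since
`-e^{-r²} (log (r/t) + 1/(2(r²+1)))` is a primitive of `2 r e^{-r²} log (r/t) - e^{-r²}/(r(r²+1)²)`,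
this integral is `e^{-t²}/(2(t²+1))` plus the integral of a positive function.
Fubini applies because `|log u| = 2 log⁺ u - log u` has circle mean at most `2 (1 + r/t)`.
-/

open MeasureTheory Real Set Filter Topology

section PolarCoord

variable {E : Type*} [NormedAddCommGroup E]

theorem Complex.polarCoord_symm_eq_circleMap (p : ℝ × ℝ) :
    Complex.polarCoord.symm p = circleMap 0 p.1 p.2 := by
  simp [circleMap, Complex.exp_mul_I, ← Complex.ofReal_cos, ← Complex.ofReal_sin]

theorem Complex.measurable_polarCoord_symm : Measurable Complex.polarCoord.symm := by
  simp only [funext Complex.polarCoord_symm_apply]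
  fun_prop

theorem CircleIntegrable.integrableOn_Ioo_polarCoord_symm {f : ℂ → E} {r : ℝ}
    (hf : CircleIntegrable f 0 r) :
    IntegrableOn (fun θ ↦ f (Complex.polarCoord.symm (r, θ))) (Ioo (-π) π) := by
  have := ((periodic_circleMap 0 r).comp f).intervalIntegrable₀ two_pi_pos.ne' hf (-π) π
  rw [intervalIntegrable_iff_integrableOn_Ioo_of_le (by linarith [pi_pos])] at this
  simp only [Complex.polarCoord_symm_eq_circleMap]
  exact this

variable [NormedSpace ℝ E]

theorem setIntegral_Ioo_polarCoord_symm_eq_circleAverage (f : ℂ → E) (r : ℝ) :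
    ∫ θ in Ioo (-π) π, f (Complex.polarCoord.symm (r, θ)) = (2 * π) • circleAverage f 0 r := by
  have hperiodic := (periodic_circleMap 0 r).comp f
  rw [circleAverage_def, smul_inv_smul₀ two_pi_pos.ne', ← integral_Ioc_eq_integral_Ioo,
    ← intervalIntegral.integral_of_le (by linarith [pi_pos])]
  simp only [Complex.polarCoord_symm_eq_circleMap]
  simpa [two_mul] using hperiodic.intervalIntegral_add_eq (-π) 0

theorem integrableOn_polarCoord_target_of_circleAverage_norm_le {f : ℂ → E}
    (hf : StronglyMeasurable f) (hfc : ∀ r > 0, CircleIntegrable f 0 r) {g : ℝ → ℝ}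
    (hg : IntegrableOn g (Ioi 0)) (hfg : ∀ r > 0, r * circleAverage (‖f ·‖) 0 r ≤ g r) :
    IntegrableOn (fun p : ℝ × ℝ ↦ p.1 • f (Complex.polarCoord.symm p)) polarCoord.target := by
  have hmeas : StronglyMeasurable fun p : ℝ × ℝ ↦ p.1 • f (Complex.polarCoord.symm p) :=
    measurable_fst.stronglyMeasurable.smul (hf.comp_measurable Complex.measurable_polarCoord_symm)
  change Integrable _ (volume.restrict (Ioi 0 ×ˢ Ioo (-π) π))
  rw [Measure.volume_eq_prod, ← Measure.prod_restrict,
    integrable_prod_iff hmeas.aestronglyMeasurable]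
  refine ⟨(ae_restrict_iff' measurableSet_Ioi).2 (.of_forall fun r hr ↦
    (hfc r hr).integrableOn_Ioo_polarCoord_symm.smul r), ?_⟩
  refine (hg.const_mul (2 * π)).mono'
    hmeas.aestronglyMeasurable.norm.integral_prod_right' ?_
  filter_upwards [ae_restrict_mem measurableSet_Ioi] with r (hr : 0 < r)
  have hnorm := setIntegral_Ioo_polarCoord_symm_eq_circleAverage (‖f ·‖) r
  have hnonneg : 0 ≤ circleAverage (‖f ·‖) 0 r :=
    circleAverage_nonneg_of_nonneg fun _ _ ↦ norm_nonneg _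
  simp only [norm_smul, integral_const_mul, hnorm, Real.norm_eq_abs, abs_of_pos hr, smul_eq_mul]
  rw [abs_of_nonneg (by positivity), mul_left_comm]
  exact mul_le_mul_of_nonneg_left (hfg r hr) two_pi_pos.le

theorem Complex.integral_eq_integral_Ioi_circleAverage [CompleteSpace E] {f : ℂ → E}
    (hf : IntegrableOn (fun p : ℝ × ℝ ↦ p.1 • f (Complex.polarCoord.symm p)) polarCoord.target) :
    ∫ z, f z = ∫ r in Ioi 0, (2 * π * r) • circleAverage f 0 r := by
  rw [← Complex.integral_comp_polarCoord_symm]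
  change ∫ p in Ioi 0 ×ˢ Ioo (-π) π, _ = _
  rw [Measure.volume_eq_prod, setIntegral_prod _ hf]
  refine setIntegral_congr_fun measurableSet_Ioi fun r _ ↦ ?_
  simp only [integral_smul, setIntegral_Ioo_polarCoord_symm_eq_circleAverage, smul_smul, mul_comm]

end PolarCoord

section CircleAverage

theorem circleAverage_log_norm_one_add_mul_zero_one (b : ℂ) :
    circleAverage (fun z ↦ log ‖1 + b * z‖) 0 1 = log⁺ ‖b‖ := by
  have hinv := circleAverage_zero_one_congr_inv (f := fun w ↦ log ‖1 + b * w⁻¹‖)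
  simp only [inv_inv] at hinv
  rw [← circleAverage_log_norm_add_const_eq_posLog, hinv]
  refine circleAverage_congr_sphere fun w hw ↦ ?_
  have hw : ‖w‖ = 1 := by simpa using hw
  have hw0 : w ≠ 0 := norm_ne_zero_iff.1 (by simp [hw])
  rw [show 1 + b * w⁻¹ = (w + b) * w⁻¹ by field_simp, norm_mul, norm_inv, hw, inv_one, mul_one]

theorem circleAverage_log_norm_one_add_div (c : ℂ) (R : ℝ) :
    circleAverage (fun z ↦ log ‖1 + z / c‖) 0 R = log⁺ (|R| / ‖c‖) := by
  rw [circleAverage_eq_circleAverage_zero_one]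
  have hunit := circleAverage_log_norm_one_add_mul_zero_one (R / c)
  simp only [norm_div, Complex.norm_real, Real.norm_eq_abs] at hunit
  rw [← hunit]
  congr with z
  ring_nf

theorem circleIntegrable_log_norm_one_add_div (c : ℂ) (R : ℝ) :
    CircleIntegrable (fun z ↦ log ‖1 + z / c‖) 0 R :=
  MeromorphicOn.circleIntegrable_log_norm fun _ _ ↦ by fun_prop

theorem circleAverage_abs_log_norm_one_add_div_le (c : ℂ) (R : ℝ) :
    circleAverage (fun z ↦ |log ‖1 + z / c‖|) 0 R ≤ 2 * (1 + |R| / ‖c‖) := by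
  have hint := circleIntegrable_log_norm_one_add_div c R
  have hposLog : CircleIntegrable (fun z ↦ log⁺ ‖1 + z / c‖) 0 R :=
    MeromorphicOn.circleIntegrable_posLog_norm fun _ _ ↦ by fun_prop
  have habs : (fun z ↦ |log ‖1 + z / c‖|) =
      (fun z ↦ (2 : ℝ) • log⁺ ‖1 + z / c‖ - log ‖1 + z / c‖) := by
    ext z
    rw [← half_mul_log_add_log_abs, smul_eq_mul]
    ring
  have hle : circleAverage (fun z ↦ log⁺ ‖1 + z / c‖) 0 R ≤ 1 + |R| / ‖c‖ := by
    refine circleAverage_mono_on_of_le_circle hposLog fun z hz ↦ ?_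
    have hz : ‖z‖ = |R| := by simpa using hz
    calc log⁺ ‖1 + z / c‖ ≤ ‖1 + z / c‖ := by
          rw [posLog_apply]; exact max_le (norm_nonneg _) (log_le_self (norm_nonneg _))
      _ ≤ 1 + |R| / ‖c‖ := by simpa [norm_div, hz] using norm_add_le 1 (z / c)
  have htwice : CircleIntegrable (fun z ↦ (2 : ℝ) • log⁺ ‖1 + z / c‖) 0 R := hposLog.const_smul
  rw [habs, circleAverage_fun_sub htwice hint, circleAverage_fun_smul,
    circleAverage_log_norm_one_add_div, smul_eq_mul]
  linarith [posLog_nonneg (x := |R| / ‖c‖)]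

theorem circleAverage_mul_comp_norm (f : ℂ → ℝ) (g : ℝ → ℝ) (R : ℝ) :
    circleAverage (fun z ↦ f z * g ‖z‖) 0 R = g |R| * circleAverage f 0 R := by
  rw [← smul_eq_mul, ← circleAverage_fun_smul]
  refine circleAverage_congr_sphere fun z hz ↦ ?_
  simp [mem_sphere_zero_iff_norm.1 hz, mul_comm]

end CircleAverage

section Radial

variable {t : ℝ}

theorem integrable_pow_mul_exp_neg_sq (n : ℕ) :
    Integrable fun x : ℝ ↦ x ^ n * exp (-x ^ 2) := by
  simpa using integrable_rpow_mul_exp_neg_mul_sq one_pos (s := n)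
    (by linarith [n.cast_nonneg (α := ℝ)])

theorem tendsto_pow_mul_exp_neg_sq_atTop_nhds_zero (n : ℕ) :
    Tendsto (fun x : ℝ ↦ x ^ n * exp (-x ^ 2)) atTop (𝓝 0) := by
  simpa using (rpow_mul_exp_neg_mul_sq_isLittleO_exp_neg one_pos n).trans_tendsto
    (tendsto_exp_atBot.comp (tendsto_id.const_mul_atTop_of_neg (by norm_num)))

theorem integrableOn_Ioi_mul_exp_neg_sq_mul_log_div (ht : 0 < t) :
    IntegrableOn (fun r ↦ 2 * r * exp (-r ^ 2) * log (r / t)) (Ioi t) := by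
  refine (((integrable_pow_mul_exp_neg_sq 2).const_mul (2 / t)).integrableOn).mono'
    (by fun_prop : Measurable _).aestronglyMeasurable ?_
  filter_upwards [ae_restrict_mem measurableSet_Ioi] with r (hr : t < r)
  have hr₀ : 0 < r := ht.trans hr
  have hlog : 0 ≤ log (r / t) := log_nonneg ((one_le_div ht).2 hr.le)
  rw [Real.norm_of_nonneg (by positivity)]
  calc 2 * r * exp (-r ^ 2) * log (r / t) ≤ 2 * r * exp (-r ^ 2) * (r / t) :=
        mul_le_mul_of_nonneg_left (log_le_self (by positivity)) (by positivity)
    _ = 2 / t * (r ^ 2 * exp (-r ^ 2)) := by ring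

theorem integrableOn_Ioi_exp_neg_sq_div (ht : 0 < t) :
    IntegrableOn (fun r ↦ exp (-r ^ 2) / (r * (r ^ 2 + 1) ^ 2)) (Ioi t) := by
  refine (((integrable_pow_mul_exp_neg_sq 0).const_mul t⁻¹).integrableOn).mono'
    (by fun_prop : Measurable _).aestronglyMeasurable ?_
  filter_upwards [ae_restrict_mem measurableSet_Ioi] with r (hr : t < r)
  have hr₀ : 0 < r := ht.trans hr
  rw [Real.norm_of_nonneg (by positivity), pow_zero, one_mul, div_eq_mul_inv, mul_comm]
  gcongr
  calc t ≤ r := hr.le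
    _ ≤ r * (r ^ 2 + 1) ^ 2 := le_mul_of_one_le_right hr₀.le (one_le_pow₀ (by nlinarith))

theorem integral_Ioi_mul_exp_neg_sq_mul_log_div (ht : 0 < t) :
    ∫ r in Ioi t, 2 * r * exp (-r ^ 2) * log (r / t) =
      exp (-t ^ 2) / (2 * (t ^ 2 + 1)) + ∫ r in Ioi t, exp (-r ^ 2) / (r * (r ^ 2 + 1) ^ 2) := by
  set ψ : ℝ → ℝ := fun r ↦ -exp (-r ^ 2) * (log (r / t) + (2 * (r ^ 2 + 1))⁻¹)
  have hderiv (r : ℝ) (hr : 0 < r) : HasDerivAt ψ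
      (2 * r * exp (-r ^ 2) * log (r / t) - exp (-r ^ 2) / (r * (r ^ 2 + 1) ^ 2)) r := by
    have := ((hasDerivAt_pow 2 r).neg.exp.neg).mul ((((hasDerivAt_id r).div_const t).log
      (by positivity)).add ((((hasDerivAt_pow 2 r).add_const 1).const_mul 2).inv (by positivity)))
    refine this.congr_deriv ?_
    simp only [Pi.add_apply, Pi.neg_apply, Pi.inv_apply, id]
    field_simp
    ring
  have hbound : ∀ᶠ r in atTop, ‖ψ r‖ ≤ t⁻¹ * (r ^ 1 * exp (-r ^ 2)) + r ^ 0 * exp (-r ^ 2) := by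
    filter_upwards [eventually_gt_atTop t] with r hr
    have hr₀ : 0 < r := ht.trans hr
    have hlog : 0 ≤ log (r / t) := log_nonneg ((one_le_div ht).2 hr.le)
    have hinv : (2 * (r ^ 2 + 1))⁻¹ ≤ 1 := inv_le_one_of_one_le₀ (by nlinarith)
    rw [norm_mul, norm_neg, Real.norm_of_nonneg (exp_pos _).le,
      Real.norm_of_nonneg (by positivity)]
    have hlog_le : log (r / t) ≤ r / t := log_le_self (by positivity)
    calc exp (-r ^ 2) * (log (r / t) + (2 * (r ^ 2 + 1))⁻¹) ≤ exp (-r ^ 2) * (r / t + 1) := by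
          gcongr
      _ = _ := by ring
  have hlim : Tendsto ψ atTop (𝓝 0) := squeeze_zero_norm' hbound <| by
    simpa using ((tendsto_pow_mul_exp_neg_sq_atTop_nhds_zero 1).const_mul t⁻¹).add
      (tendsto_pow_mul_exp_neg_sq_atTop_nhds_zero 0)
  have hftc := integral_Ioi_of_hasDerivAt_of_tendsto (hderiv t ht).continuousAt.continuousWithinAt
    (fun r hr ↦ hderiv r (ht.trans hr)) ((integrableOn_Ioi_mul_exp_neg_sq_mul_log_div ht).sub
      (integrableOn_Ioi_exp_neg_sq_div ht)) hlim
  rw [integral_sub (integrableOn_Ioi_mul_exp_neg_sq_mul_log_div ht)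
    (integrableOn_Ioi_exp_neg_sq_div ht)] at hftc
  simp only [ψ, div_self ht.ne', log_one, zero_add, zero_sub, neg_mul, neg_neg,
    ← div_eq_mul_inv] at hftc
  linarith

theorem integral_Ioi_exp_neg_sq_div_pos (ht : 0 < t) :
    0 < ∫ r in Ioi t, exp (-r ^ 2) / (r * (r ^ 2 + 1) ^ 2) := by
  have hpos : ∀ r ∈ Ioi t, 0 < exp (-r ^ 2) / (r * (r ^ 2 + 1) ^ 2) := fun r (hr : t < r) ↦ by
    have := ht.trans hr; positivity
  rw [setIntegral_pos_iff_support_of_nonneg_ae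
    ((ae_restrict_iff' measurableSet_Ioi).2 (.of_forall fun r hr ↦ (hpos r hr).le))
    (integrableOn_Ioi_exp_neg_sq_div ht),
    inter_eq_right.2 fun r hr ↦ Function.mem_support.2 (hpos r hr).ne', volume_Ioi]
  exact ENNReal.zero_lt_top

theorem exp_neg_sq_div_lt_integral_Ioi_mul_exp_neg_sq_mul_log_div (ht : 0 < t) :
    exp (-t ^ 2) / (2 * (t ^ 2 + 1)) < ∫ r in Ioi t, 2 * r * exp (-r ^ 2) * log (r / t) := by
  rw [integral_Ioi_mul_exp_neg_sq_mul_log_div ht]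
  exact lt_add_of_pos_right _ (integral_Ioi_exp_neg_sq_div_pos ht)

end Radial

section GaussianExpectation

variable {t : ℝ}

theorem integrableOn_polarCoord_log_norm_one_add_div_mul_gaussian (ht : 0 < t) :
    IntegrableOn (fun p : ℝ × ℝ ↦ p.1 • (log ‖1 + Complex.polarCoord.symm p / (t : ℂ)‖ *
      ((1 / π) * exp (-‖Complex.polarCoord.symm p‖ ^ 2)))) polarCoord.target := by
  refine integrableOn_polarCoord_target_of_circleAverage_norm_le
    (f := fun z : ℂ ↦ log ‖1 + z / (t : ℂ)‖ * ((1 / π) * exp (-‖z‖ ^ 2)))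
    (by fun_prop : Measurable _).stronglyMeasurable
    (fun r _ ↦ (circleIntegrable_log_norm_one_add_div t r).fun_mul_continuousOn (by fun_prop))
    (g := fun r ↦ 2 / π * (r ^ 1 * exp (-r ^ 2) + t⁻¹ * (r ^ 2 * exp (-r ^ 2))))
    (((integrable_pow_mul_exp_neg_sq 1).add
      ((integrable_pow_mul_exp_neg_sq 2).const_mul _)).const_mul _).integrableOn fun r hr ↦ ?_
  have hnorm : (fun z : ℂ ↦ ‖log ‖1 + z / (t : ℂ)‖ * ((1 / π) * exp (-‖z‖ ^ 2))‖) =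
      fun z ↦ |log ‖1 + z / (t : ℂ)‖| * ((1 / π) * exp (-‖z‖ ^ 2)) := by
    ext z
    rw [norm_mul, Real.norm_eq_abs, Real.norm_of_nonneg (by positivity)]
  have hbound := circleAverage_abs_log_norm_one_add_div_le (t : ℂ) r
  rw [Complex.norm_real, Real.norm_of_nonneg ht.le, abs_of_pos hr] at hbound
  rw [hnorm, circleAverage_mul_comp_norm (fun z ↦ |log ‖1 + z / (t : ℂ)‖|)
    (fun s ↦ (1 / π) * exp (-s ^ 2)), sq_abs]
  calc _ ≤ r * (1 / π * exp (-r ^ 2) * (2 * (1 + r / t))) := by gcongr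
    _ = _ := by ring

theorem integral_log_norm_one_add_div_mul_gaussian (ht : 0 < t) :
    ∫ z : ℂ, log ‖1 + z / (t : ℂ)‖ * ((1 / π) * exp (-‖z‖ ^ 2)) =
      ∫ r in Ioi t, 2 * r * exp (-r ^ 2) * log (r / t) := by
  have haverage (r : ℝ) : circleAverage (fun z : ℂ ↦ log ‖1 + z / (t : ℂ)‖ *
      ((1 / π) * exp (-‖z‖ ^ 2))) 0 r = (1 / π) * exp (-r ^ 2) * log⁺ (|r| / t) := by
    rw [circleAverage_mul_comp_norm (fun z ↦ log ‖1 + z / (t : ℂ)‖) (fun s ↦ (1 / π) * exp (-s ^ 2)),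
      circleAverage_log_norm_one_add_div, Complex.norm_real, Real.norm_of_nonneg ht.le, sq_abs]
  rw [Complex.integral_eq_integral_Ioi_circleAverage
    (integrableOn_polarCoord_log_norm_one_add_div_mul_gaussian ht),
    setIntegral_eq_of_subset_of_forall_sdiff_eq_zero measurableSet_Ioi (Ioi_subset_Ioi ht.le)]
  · refine setIntegral_congr_fun measurableSet_Ioi fun r (hr : t < r) ↦ ?_
    have hr₀ : 0 < r := ht.trans hr
    have hrt : 1 ≤ |r / t| := by rw [abs_of_pos (by positivity)]; exact (one_le_div ht).2 hr.le
    rw [haverage, abs_of_pos hr₀, posLog_eq_log hrt, smul_eq_mul]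
    field_simp
  · rintro r ⟨hr₀ : 0 < r, hrt : ¬t < r⟩
    have hrt : |r / t| ≤ 1 := by
      rw [abs_of_pos (by positivity)]; exact (div_le_one ht).2 (not_lt.1 hrt)
    rw [haverage, abs_of_pos hr₀, (posLog_eq_zero_iff _).2 hrt, mul_zero, smul_zero]

end GaussianExpectation

/-- For a standard complex Gaussian ζ and t > 0,
`E[log|1 + ζ/t|] > e^{-t²}/(2(t²+1))`. -/
theorem hole_prob_stmt_3 (t : ℝ) (ht : 0 < t) :
    (∫ z : ℂ, Real.log ‖1 + z / (t : ℂ)‖ * ((1 / π) * Real.exp (-‖z‖ ^ 2))) >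
      Real.exp (-t ^ 2) / (2 * (t ^ 2 + 1)) := by
  rw [gt_iff_lt, integral_log_norm_one_add_div_mul_gaussian ht]
  exact exp_neg_sq_div_lt_integral_Ioi_mul_exp_neg_sq_mul_log_div ht
end

section
/- There exists a universal constant C > 0 such that for every standard complex Gaussian ζ, every t > 0, every w ∈ ℂ, and every θ with 0 < θ ≤ 1, one has E[|w + ζ/t|^{-θ}] ≤ t^θ (1 + Cθ). -/
/-!
Writing `w + ζ / t = (t w + ζ) / t` pulls out the factor `t ^ θ`, so it suffices to bound
`E ‖a + ζ‖ ^ (-θ)` uniformly in `a`. The Gaussian density `g` is at most `1 / π`, hence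
`‖a + z‖ ^ (-θ) g z ≤ g z + π⁻¹ (‖a + z‖ ^ (-θ) - 1)⁺`, and by translation invariance and polar
coordinates `∫ (‖z‖ ^ (-θ) - 1)⁺ = 2π ∫₀¹ (r ^ (1 - θ) - r) dr = π θ / (2 - θ)`.
So `E ‖a + ζ‖ ^ (-θ) ≤ 1 + θ / (2 - θ) ≤ 1 + θ`, and `C = 1` works without rearrangement.
-/

open MeasureTheory Real Set

lemma integral_Ioi_mul_max_rpow_neg_sub_one {θ : ℝ} (hθ0 : 0 < θ) (hθ : θ < 2) :
    ∫ r in Ioi (0 : ℝ), r * max (r ^ (-θ) - 1) 0 = 1 / (2 - θ) - 1 / 2 := by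
  have hθ' : -1 < 1 - θ := by linarith
  have hzero : ∀ r ∈ Ioi (0 : ℝ) \ Ioc 0 1, r * max (r ^ (-θ) - 1) 0 = 0 := by
    rintro r ⟨hr0, hr1⟩
    have : 1 < r := by simp_all
    rw [max_eq_right, mul_zero]
    linarith [rpow_le_one_of_one_le_of_nonpos this.le (neg_nonpos.2 hθ0.le)]
  have hcongr : ∀ r ∈ Ioc (0 : ℝ) 1, r * max (r ^ (-θ) - 1) 0 = r ^ (1 - θ) - r := by
    rintro r ⟨hr0, hr1⟩
    rw [max_eq_left, mul_sub, mul_one, sub_eq_add_neg 1 θ, rpow_add hr0, rpow_one]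
    linarith [one_le_rpow_of_pos_of_le_one_of_nonpos hr0 hr1 (neg_nonpos.2 hθ0.le)]
  rw [setIntegral_eq_of_subset_of_ae_sdiff_eq_zero nullMeasurableSet_Ioi Ioc_subset_Ioi_self
    (.of_forall hzero), setIntegral_congr_fun measurableSet_Ioc hcongr,
    ← intervalIntegral.integral_of_le zero_le_one, intervalIntegral.integral_sub
    (intervalIntegral.intervalIntegrable_rpow' hθ') intervalIntegral.intervalIntegrable_id,
    integral_rpow (.inl hθ'), integral_id, zero_rpow (by linarith)]
  norm_num
  ring

lemma integral_max_rpow_neg_norm_sub_one {θ : ℝ} (hθ0 : 0 < θ) (hθ : θ < 2) :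
    ∫ z : ℂ, max (‖z‖ ^ (-θ) - 1) 0 = π * θ / (2 - θ) := by
  rw [integral_fun_norm_addHaar volume (fun r => max (r ^ (-θ) - 1) 0)]
  simp only [Complex.finrank_real_complex, Measure.real, Complex.volume_ball, smul_eq_mul,
    ENNReal.ofReal_one, one_pow, one_mul, ENNReal.coe_toReal, NNReal.coe_real_pi,
    Nat.add_one_sub_one, pow_one, integral_Ioi_mul_max_rpow_neg_sub_one hθ0 hθ, one_div,
    nsmul_eq_mul, Nat.cast_ofNat]
  have : 2 - θ ≠ 0 := by linarith
  field_simp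
  ring

lemma integrable_max_rpow_neg_norm_sub_one {θ : ℝ} (hθ0 : 0 < θ) (hθ : θ < 2) :
    Integrable fun z : ℂ => max (‖z‖ ^ (-θ) - 1) 0 :=
  .of_integral_ne_zero <| by
    rw [integral_max_rpow_neg_norm_sub_one hθ0 hθ]
    have := sub_pos.2 hθ
    positivity

lemma integral_exp_neg_norm_sq_complex : ∫ z : ℂ, rexp (-‖z‖ ^ 2) = π := by
  simpa using GaussianFourier.integral_rexp_neg_mul_sq_norm (V := ℂ) one_pos

lemma integrable_exp_neg_norm_sq_complex : Integrable fun z : ℂ => rexp (-‖z‖ ^ 2) :=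
  .of_integral_ne_zero <| by rw [integral_exp_neg_norm_sq_complex]; exact pi_ne_zero

lemma mul_le_add_mul_max_sub_one {x g c : ℝ} (hg : 0 ≤ g) (hgc : g ≤ c) :
    x * g ≤ g + c * max (x - 1) 0 := by
  rcases le_total x 1 with h | h
  · rw [max_eq_right (by linarith)]
    nlinarith
  · rw [max_eq_left (by linarith)]
    nlinarith

lemma integral_rpow_neg_norm_add_mul_gaussian_le (a : ℂ) {θ : ℝ} (hθ0 : 0 < θ) (hθ : θ < 2) :
    ∫ z : ℂ, ‖a + z‖ ^ (-θ) * ((1 / π) * rexp (-‖z‖ ^ 2)) ≤ 1 + θ / (2 - θ) := by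
  have hgauss := integrable_exp_neg_norm_sq_complex.const_mul (1 / π)
  have hmax := (integrable_max_rpow_neg_norm_sub_one hθ0 hθ).comp_add_left a
  have hpointwise (z : ℂ) : ‖a + z‖ ^ (-θ) * ((1 / π) * rexp (-‖z‖ ^ 2))
      ≤ (1 / π) * rexp (-‖z‖ ^ 2) + 1 / π * max (‖a + z‖ ^ (-θ) - 1) 0 := by
    exact mul_le_add_mul_max_sub_one (by positivity)
      (mul_le_of_le_one_right (by positivity) (exp_le_one_iff.2 (by simp)))
  calc ∫ z : ℂ, ‖a + z‖ ^ (-θ) * ((1 / π) * rexp (-‖z‖ ^ 2))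
      ≤ ∫ z : ℂ, ((1 / π) * rexp (-‖z‖ ^ 2) + 1 / π * max (‖a + z‖ ^ (-θ) - 1) 0) :=
        integral_mono_of_nonneg (.of_forall fun z => by positivity)
          (hgauss.add (hmax.const_mul _)) (.of_forall hpointwise)
    _ = 1 / π * π + 1 / π * (π * θ / (2 - θ)) := by
        rw [integral_add hgauss (hmax.const_mul _), integral_const_mul, integral_const_mul,
          integral_exp_neg_norm_sq_complex,
          integral_add_left_eq_self (fun z => max (‖z‖ ^ (-θ) - 1) 0),
          integral_max_rpow_neg_norm_sub_one hθ0 hθ]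
    _ = 1 + θ / (2 - θ) := by field_simp

lemma rpow_neg_norm_add_div {t : ℝ} (ht : 0 < t) (w z : ℂ) (θ : ℝ) :
    ‖w + z / (t : ℂ)‖ ^ (-θ) = t ^ θ * ‖(t : ℂ) * w + z‖ ^ (-θ) := by
  have htc : (t : ℂ) ≠ 0 := Complex.ofReal_ne_zero.2 ht.ne'
  have hdiv : w + z / (t : ℂ) = ((t : ℂ) * w + z) / t := by field_simp
  rw [hdiv, norm_div, Complex.norm_real, norm_of_nonneg ht.le,
    div_rpow (norm_nonneg _) ht.le, rpow_neg ht.le, div_inv_eq_mul, mul_comm]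

/-- There is a universal constant C > 0 such that for every t > 0, w ∈ ℂ and 0 < θ ≤ 1,
`E[|w + ζ/t|^{-θ}] ≤ t^θ (1 + Cθ)` for a standard complex Gaussian ζ. -/
theorem hole_prob_stmt_4 :
    ∃ C > (0 : ℝ), ∀ (t : ℝ), 0 < t → ∀ (w : ℂ) (θ : ℝ), 0 < θ → θ ≤ 1 →
      (∫ z : ℂ, ‖w + z / (t : ℂ)‖ ^ (-θ) * ((1 / π) * Real.exp (-‖z‖ ^ 2)))
        ≤ t ^ θ * (1 + C * θ) := by
  refine ⟨1, one_pos, fun t ht w θ hθ0 hθ1 => ?_⟩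
  simp_rw [rpow_neg_norm_add_div ht, mul_assoc]
  rw [integral_const_mul]
  gcongr
  calc _ ≤ 1 + θ / (2 - θ) := integral_rpow_neg_norm_add_mul_gaussian_le _ hθ0 (by linarith)
    _ ≤ 1 + 1 * θ := by
        gcongr
        rw [one_mul]
        exact div_le_self hθ0.le (by linarith)
end

section
/- For each τ > 0 there exists a constant C(τ) > 0 such that for every standard complex Gaussian ζ, every integer n ≥ 1, and every real t with |t| ≥ τ, E[ |log|1 + ζ/t||^n ] ≤ C(τ) · n!. -/
/-!
Write `x = ‖1 + ζ / t‖`. Since `|log x| ^ n / n! ≤ exp |log x| = max x x⁻¹`, it suffices to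
bound `E[x]` and `E[x⁻¹]` uniformly in `|t| ≥ τ`. The first is at most `1 + E‖ζ‖ / |t|`.
For `x⁻¹ = |t| / ‖ζ + t‖` we use `x⁻¹ ≤ 2` off the disc `‖ζ + t‖ < |t| / 2`; on that disc
`‖ζ‖ > |t| / 2`, so the density is at most `exp (-t² / 4) / π` there, and since `∫ ‖w‖⁻¹`
over a disc of radius `r` is `2πr` (the singularity is integrable in the plane), the disc
contributes at most `t² exp (-t² / 4) ≤ 4`.
-/

open MeasureTheory Real Metric Set

noncomputable def complexGaussianPDF (z : ℂ) : ℝ := (1 / π) * rexp (-‖z‖ ^ 2)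

theorem integrable_exp_neg_mul_sq_norm {V : Type*} [NormedAddCommGroup V]
    [InnerProductSpace ℝ V] [FiniteDimensional ℝ V] [MeasurableSpace V] [BorelSpace V]
    {b : ℝ} (hb : 0 < b) : Integrable fun v : V => rexp (-b * ‖v‖ ^ 2) := by
  simpa [← Complex.ofReal_pow, ← Complex.ofReal_neg, ← Complex.ofReal_mul,
      Complex.norm_exp_ofReal] using
    (GaussianFourier.integrable_cexp_neg_mul_sq_norm_add (V := V) (b := b)
      (by simpa using hb) 0 0).norm

theorem complexGaussianPDF_nonneg (z : ℂ) : 0 ≤ complexGaussianPDF z := by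
  unfold complexGaussianPDF; positivity

theorem complexGaussianPDF_le (z : ℂ) : complexGaussianPDF z ≤ 1 / π :=
  mul_le_of_le_one_right (by positivity) (exp_le_one_iff.2 (neg_nonpos.2 (sq_nonneg _)))

@[fun_prop]
theorem continuous_complexGaussianPDF : Continuous complexGaussianPDF := by
  unfold complexGaussianPDF; fun_prop

theorem integrable_complexGaussianPDF : Integrable complexGaussianPDF := by
  unfold complexGaussianPDF
  simpa using (integrable_exp_neg_mul_sq_norm (V := ℂ) one_pos).const_mul (1 / π)

theorem integral_complexGaussianPDF : ∫ z, complexGaussianPDF z = 1 := by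
  have h := GaussianFourier.integral_rexp_neg_mul_sq_norm (V := ℂ) one_pos
  simp only [neg_mul, one_mul, Complex.finrank_real_complex, div_one] at h
  unfold complexGaussianPDF
  rw [integral_const_mul, h]
  norm_num [pi_ne_zero]

theorem mul_exp_neg_sq_le (s : ℝ) : s * rexp (-s ^ 2) ≤ rexp (-(1 / 2) * s ^ 2) := by
  have hs : s ≤ rexp (s ^ 2 / 2) := by
    nlinarith [add_one_le_exp (s ^ 2 / 2), sq_nonneg (s - 1)]
  calc s * rexp (-s ^ 2) ≤ rexp (s ^ 2 / 2) * rexp (-s ^ 2) := by gcongr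
    _ = rexp (-(1 / 2) * s ^ 2) := by rw [← exp_add]; ring_nf

theorem integrable_norm_mul_complexGaussianPDF :
    Integrable fun z => ‖z‖ * complexGaussianPDF z := by
  refine ((integrable_exp_neg_mul_sq_norm (V := ℂ) (b := 1 / 2) (by norm_num)).const_mul
    (1 / π)).mono' (by fun_prop) (.of_forall fun z => ?_)
  rw [norm_of_nonneg (mul_nonneg (norm_nonneg z) (complexGaussianPDF_nonneg z)),
    complexGaussianPDF, mul_left_comm]
  gcongr
  exact mul_exp_neg_sq_le ‖z‖

theorem sq_mul_exp_neg_sq_div_four_le (s : ℝ) : s ^ 2 * rexp (-(s ^ 2 / 4)) ≤ 4 := by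
  rw [exp_neg, mul_inv_le_iff₀ (exp_pos _)]
  linarith [add_one_le_exp (s ^ 2 / 4)]

theorem abs_log_pow_le_factorial_mul {x : ℝ} (hx : 0 ≤ x) {n : ℕ} (hn : n ≠ 0) :
    |log x| ^ n ≤ n.factorial * (x + x⁻¹) := by
  rcases hx.eq_or_lt with rfl | hx
  · simp [hn]
  have hexp : rexp |log x| ≤ x + x⁻¹ := by
    rcases abs_cases (log x) with ⟨h, -⟩ | ⟨h, -⟩
    · rw [h, exp_log hx]; linarith [inv_pos.2 hx]
    · rw [h, ← log_inv, exp_log (inv_pos.2 hx)]; linarith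
  have := pow_div_factorial_le_exp _ (abs_nonneg (log x)) n
  rw [div_le_iff₀ (by positivity)] at this
  nlinarith [(Nat.cast_pos (α := ℝ)).2 n.factorial_pos]

theorem integrable_indicator_ball_inv_norm_and_integral_eq {r : ℝ} (hr : 0 ≤ r) :
    Integrable ((ball (0 : ℂ) r).indicator (‖·‖⁻¹)) ∧
      ∫ w, (ball (0 : ℂ) r).indicator (‖·‖⁻¹) w = 2 * π * r := by
  have hf : (ball (0 : ℂ) r).indicator (‖·‖⁻¹) = fun w => (Iio r).indicator (·⁻¹) ‖w‖ := by
    ext w; simp [indicator]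
  have hcongr : EqOn (fun y : ℝ => y ^ (Module.finrank ℝ ℂ - 1) • (Iio r).indicator (·⁻¹) y)
      ((Iio r).indicator 1) (Ioi 0) := by
    intro y (hy : 0 < y)
    by_cases hyr : y < r <;> simp [hyr, hy.ne']
  have hIoo : Iio r ∩ Ioi 0 = Ioo 0 r := by ext; simp [and_comm]
  rw [hf, integrable_fun_norm_addHaar, integral_fun_norm_addHaar,
    integrableOn_congr_fun hcongr measurableSet_Ioi,
    setIntegral_congr_fun measurableSet_Ioi hcongr, IntegrableOn,
    integrable_indicator_iff measurableSet_Iio, integral_indicator measurableSet_Iio]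
  constructor
  · exact integrableOn_const (by simp [hIoo])
  · simp [Measure.real, Complex.volume_ball, hIoo, hr]
    ring

section
variable (t : ℝ)

theorem norm_one_add_div_mul_complexGaussianPDF_le (z : ℂ) :
    ‖1 + z / t‖ * complexGaussianPDF z ≤
      complexGaussianPDF z + |t|⁻¹ * (‖z‖ * complexGaussianPDF z) := by
  have hnorm : ‖1 + z / t‖ ≤ 1 + |t|⁻¹ * ‖z‖ := by
    calc ‖1 + z / t‖ ≤ ‖(1 : ℂ)‖ + ‖z / t‖ := norm_add_le _ _
      _ = 1 + |t|⁻¹ * ‖z‖ := by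
        rw [norm_one, norm_div, Complex.norm_real, norm_eq_abs, inv_mul_eq_div]
  have := mul_le_mul_of_nonneg_right hnorm (complexGaussianPDF_nonneg z)
  linarith

theorem integrable_norm_one_add_div_mul_complexGaussianPDF :
    Integrable fun z : ℂ => ‖1 + z / t‖ * complexGaussianPDF z := by
  have hmaj : Integrable fun z => complexGaussianPDF z + |t|⁻¹ * (‖z‖ * complexGaussianPDF z) :=
    integrable_complexGaussianPDF.add (integrable_norm_mul_complexGaussianPDF.const_mul _)
  refine hmaj.mono' (by fun_prop) (.of_forall fun z => ?_)
  rw [norm_of_nonneg (mul_nonneg (norm_nonneg _) (complexGaussianPDF_nonneg z))]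
  exact norm_one_add_div_mul_complexGaussianPDF_le t z

theorem integral_norm_one_add_div_mul_complexGaussianPDF_le :
    ∫ z : ℂ, ‖1 + z / t‖ * complexGaussianPDF z ≤
      1 + |t|⁻¹ * ∫ z, ‖z‖ * complexGaussianPDF z := by
  have hint := integrable_norm_mul_complexGaussianPDF.const_mul |t|⁻¹
  calc _ ≤ ∫ z, (complexGaussianPDF z + |t|⁻¹ * (‖z‖ * complexGaussianPDF z)) :=
        integral_mono (integrable_norm_one_add_div_mul_complexGaussianPDF t)
          (integrable_complexGaussianPDF.add hint) (norm_one_add_div_mul_complexGaussianPDF_le t)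
    _ = 1 + |t|⁻¹ * ∫ z, ‖z‖ * complexGaussianPDF z := by
        rw [integral_add integrable_complexGaussianPDF hint, integral_complexGaussianPDF,
          integral_const_mul]

theorem inv_norm_one_add_div_le (z : ℂ) :
    ‖1 + z / t‖⁻¹ ≤ 2 + |t| * (ball (0 : ℂ) (|t| / 2)).indicator (‖·‖⁻¹) (z + t) := by
  rcases eq_or_ne t 0 with rfl | ht
  · simp
  have hx : ‖1 + z / t‖ = ‖z + t‖ / |t| := by
    rw [← norm_eq_abs, ← Complex.norm_real, ← norm_div, add_div,
      div_self (by exact_mod_cast ht), add_comm]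
  by_cases hz : ‖z + t‖ < |t| / 2
  · rw [indicator_of_mem (by simpa using hz), hx, inv_div, div_eq_mul_inv]
    linarith
  · rw [indicator_of_notMem (by simpa using hz), mul_zero, add_zero]
    refine inv_le_of_inv_le₀ (by norm_num) ?_
    rw [hx, le_div_iff₀ (abs_pos.2 ht)]
    linarith

theorem indicator_mul_complexGaussianPDF_le (z : ℂ) :
    (ball (0 : ℂ) (|t| / 2)).indicator (‖·‖⁻¹) (z + t) * complexGaussianPDF z ≤
      (ball (0 : ℂ) (|t| / 2)).indicator (‖·‖⁻¹) (z + t) * (1 / π * rexp (-(t ^ 2 / 4))) := by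
  by_cases hz : z + t ∈ ball (0 : ℂ) (|t| / 2)
  · rw [indicator_of_mem hz]
    have hzt : |t| / 2 ≤ ‖z‖ := by
      have := norm_sub_norm_le (t : ℂ) (z + t)
      rw [mem_ball_zero_iff] at hz
      rw [sub_add_cancel_right, norm_neg, Complex.norm_real, norm_eq_abs] at this
      linarith
    unfold complexGaussianPDF
    gcongr
    rw [← sq_abs t]
    nlinarith [abs_nonneg t]
  · simp [indicator_of_notMem hz]

theorem integrable_indicator_ball_mul_complexGaussianPDF :
    Integrable fun z : ℂ =>
      (ball (0 : ℂ) (|t| / 2)).indicator (‖·‖⁻¹) (z + t) * complexGaussianPDF z :=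
  ((integrable_indicator_ball_inv_norm_and_integral_eq (by positivity)).1.comp_add_right _).mul_bdd
    (by fun_prop) (.of_forall fun z => by
      rw [norm_of_nonneg (complexGaussianPDF_nonneg z)]; exact complexGaussianPDF_le z)

theorem integral_indicator_ball_mul_complexGaussianPDF_le :
    ∫ z : ℂ, (ball (0 : ℂ) (|t| / 2)).indicator (‖·‖⁻¹) (z + t) * complexGaussianPDF z ≤
      |t| * rexp (-(t ^ 2 / 4)) := by
  obtain ⟨hint, hval⟩ :=
    integrable_indicator_ball_inv_norm_and_integral_eq (by positivity : 0 ≤ |t| / 2)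
  calc _ ≤ ∫ z : ℂ, (ball (0 : ℂ) (|t| / 2)).indicator (‖·‖⁻¹) (z + t) *
          (1 / π * rexp (-(t ^ 2 / 4))) :=
        integral_mono (integrable_indicator_ball_mul_complexGaussianPDF t)
          ((hint.comp_add_right _).mul_const _) (indicator_mul_complexGaussianPDF_le t)
    _ = |t| * rexp (-(t ^ 2 / 4)) := by
        rw [integral_mul_const,
          integral_add_right_eq_self (fun w => (ball (0 : ℂ) (|t| / 2)).indicator (‖·‖⁻¹) w),
          hval]
        field_simp

theorem inv_norm_one_add_div_mul_complexGaussianPDF_le (z : ℂ) :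
    ‖1 + z / t‖⁻¹ * complexGaussianPDF z ≤ 2 * complexGaussianPDF z +
      |t| * ((ball (0 : ℂ) (|t| / 2)).indicator (‖·‖⁻¹) (z + t) * complexGaussianPDF z) := by
  have := mul_le_mul_of_nonneg_right (inv_norm_one_add_div_le t z) (complexGaussianPDF_nonneg z)
  linarith

theorem integrable_inv_norm_one_add_div_mul_complexGaussianPDF :
    Integrable fun z : ℂ => ‖1 + z / t‖⁻¹ * complexGaussianPDF z := by
  have hmaj : Integrable fun z : ℂ => 2 * complexGaussianPDF z +
      |t| * ((ball (0 : ℂ) (|t| / 2)).indicator (‖·‖⁻¹) (z + t) * complexGaussianPDF z) :=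
    (integrable_complexGaussianPDF.const_mul 2).add
      ((integrable_indicator_ball_mul_complexGaussianPDF t).const_mul |t|)
  refine hmaj.mono' (by fun_prop) (.of_forall fun z => ?_)
  rw [norm_of_nonneg (mul_nonneg (by positivity) (complexGaussianPDF_nonneg z))]
  exact inv_norm_one_add_div_mul_complexGaussianPDF_le t z

theorem integral_inv_norm_one_add_div_mul_complexGaussianPDF_le :
    ∫ z : ℂ, ‖1 + z / t‖⁻¹ * complexGaussianPDF z ≤ 6 := by
  have h2 := integrable_complexGaussianPDF.const_mul 2
  have hsing := (integrable_indicator_ball_mul_complexGaussianPDF t).const_mul |t|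
  calc _ ≤ ∫ z : ℂ, (2 * complexGaussianPDF z +
        |t| * ((ball (0 : ℂ) (|t| / 2)).indicator (‖·‖⁻¹) (z + t) * complexGaussianPDF z)) :=
        integral_mono (integrable_inv_norm_one_add_div_mul_complexGaussianPDF t) (h2.add hsing)
          (inv_norm_one_add_div_mul_complexGaussianPDF_le t)
    _ ≤ 2 + |t| * (|t| * rexp (-(t ^ 2 / 4))) := by
        rw [integral_add h2 hsing, integral_const_mul, integral_const_mul,
          integral_complexGaussianPDF, mul_one]
        gcongr
        exact integral_indicator_ball_mul_complexGaussianPDF_le t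
    _ = 2 + t ^ 2 * rexp (-(t ^ 2 / 4)) := by rw [← mul_assoc, ← sq, sq_abs]
    _ ≤ 6 := by linarith [sq_mul_exp_neg_sq_div_four_le t]

end

/-- For each τ > 0 there is C(τ) > 0 such that for all integers n ≥ 1 and |t| ≥ τ,
`E[|log|1 + ζ/t||^n] ≤ C(τ) n!` for a standard complex Gaussian ζ. -/
theorem hole_prob_stmt_5 (τ : ℝ) (hτ : 0 < τ) :
    ∃ C > (0 : ℝ), ∀ (n : ℕ), 1 ≤ n → ∀ (t : ℝ), τ ≤ |t| →
      (∫ z : ℂ, |Real.log ‖1 + z / (t : ℂ)‖| ^ n * ((1 / π) * Real.exp (-‖z‖ ^ 2)))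
        ≤ C * (Nat.factorial n : ℝ) := by
  set M := ∫ z : ℂ, ‖z‖ * complexGaussianPDF z
  have hM : 0 ≤ M :=
    integral_nonneg fun z => mul_nonneg (norm_nonneg z) (complexGaussianPDF_nonneg z)
  refine ⟨7 + τ⁻¹ * M, by positivity, fun n hn t ht => ?_⟩
  have hx := integrable_norm_one_add_div_mul_complexGaussianPDF t
  have hinv := integrable_inv_norm_one_add_div_mul_complexGaussianPDF t
  have hpt (z : ℂ) : |log ‖1 + z / t‖| ^ n * complexGaussianPDF z ≤ n.factorial *
      (‖1 + z / t‖ * complexGaussianPDF z + ‖1 + z / t‖⁻¹ * complexGaussianPDF z) := by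
    rw [← add_mul, ← mul_assoc]
    exact mul_le_mul_of_nonneg_right (abs_log_pow_le_factorial_mul (norm_nonneg _) (by omega))
      (complexGaussianPDF_nonneg z)
  calc ∫ z : ℂ, |log ‖1 + z / t‖| ^ n * complexGaussianPDF z
      ≤ ∫ z : ℂ, n.factorial *
          (‖1 + z / t‖ * complexGaussianPDF z + ‖1 + z / t‖⁻¹ * complexGaussianPDF z) :=
        integral_mono_of_nonneg (.of_forall fun z => mul_nonneg (by positivity)
          (complexGaussianPDF_nonneg z)) ((hx.add hinv).const_mul _) (.of_forall hpt)
    _ ≤ n.factorial * ((1 + |t|⁻¹ * M) + 6) := by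
        rw [integral_const_mul, integral_add hx hinv]
        gcongr
        · exact integral_norm_one_add_div_mul_complexGaussianPDF_le t
        · exact integral_inv_norm_one_add_div_mul_complexGaussianPDF_le t
    _ = (7 + |t|⁻¹ * M) * n.factorial := by ring
    _ ≤ (7 + τ⁻¹ * M) * n.factorial := by gcongr
end

section
/- Let (η_1,…,η_N) be a centered complex Gaussian vector with (Hermitian positive definite) covariance matrix Σ, i.e. Σ_{jk} = E[η_j conj(η_k)], and let Λ be the maximal eigenvalue of Σ. Then for every θ with 0 ≤ θ < 2, E[∏_{j=1}^N |η_j|^{-θ}] ≤ (1/det Σ) · (Λ^{1 − θ/2} · Γ(1 − θ/2))^N. -/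
/-!
Since every eigenvalue of `S` is at most `Λ`, the functional calculus gives `Λ⁻¹ ≤ S⁻¹` in the
Loewner order, so the Gaussian density is dominated by `∏ⱼ exp (-Λ⁻¹ |Zⱼ|²)`. The dominating
integrand is a product of functions of one coordinate each, so by Fubini its integral is the
`N`-th power of `∫_ℂ |z|^{-θ} exp (-Λ⁻¹ |z|²) = π Λ^{1-θ/2} Γ(1-θ/2)`.
-/

open MeasureTheory Real Matrix
open scoped ComplexOrder

theorem Complex.integrable_rpow_mul_exp_neg_mul_rpow {p s b : ℝ} (hp : 1 ≤ p) (hs : -2 < s)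
    (hb : 0 < b) : Integrable (fun z : ℂ => ‖z‖ ^ s * rexp (-b * ‖z‖ ^ p)) := by
  rw [integrable_fun_norm_addHaar volume (f := fun r => r ^ s * rexp (-b * r ^ p)),
    Complex.finrank_real_complex]
  refine (integrableOn_rpow_mul_exp_neg_mul_rpow (p := p) (s := s + 1) (by linarith)
    (by linarith) hb).congr_fun (fun r (hr : 0 < r) => ?_) measurableSet_Ioi
  simp only [Nat.add_one_sub_one, pow_one, smul_eq_mul, rpow_add hr, rpow_one]
  ring

theorem Complex.integral_rpow_neg_mul_exp_neg_inv_mul_sq {Λ θ : ℝ} (hΛ : 0 < Λ) (hθ : θ < 2) :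
    ∫ z : ℂ, ‖z‖ ^ (-θ) * rexp (-Λ⁻¹ * ‖z‖ ^ (2 : ℝ)) =
      π * (Λ ^ (1 - θ / 2) * Real.Gamma (1 - θ / 2)) := by
  rw [Complex.integral_rpow_mul_exp_neg_mul_rpow one_le_two (by linarith) (inv_pos.2 hΛ),
    inv_rpow hΛ.le, ← rpow_neg hΛ.le]
  ring_nf

namespace Matrix

variable {n 𝕜 : Type*} [Fintype n] [DecidableEq n] [RCLike 𝕜] {A : Matrix n n 𝕜}

open scoped MatrixOrder

theorem le_re_dotProduct_mulVec_of_algebraMap_le {r : ℝ} (h : algebraMap ℝ _ r ≤ A)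
    (x : n → 𝕜) : r * ∑ i, ‖x i‖ ^ 2 ≤ RCLike.re (star x ⬝ᵥ (A *ᵥ x)) := by
  have hnonneg := (le_iff.1 h).re_dotProduct_nonneg x
  rw [sub_mulVec, dotProduct_sub, map_sub, Algebra.algebraMap_eq_smul_one, smul_mulVec,
    one_mulVec, dotProduct_smul] at hnonneg
  have hx : RCLike.re (r • (star x ⬝ᵥ x)) = r * ∑ i, ‖x i‖ ^ 2 := by
    simp only [dotProduct, Pi.star_apply, RCLike.star_def, RCLike.conj_mul]
    simp_rw [RCLike.smul_re, map_sum, ← RCLike.ofReal_pow, RCLike.ofReal_re]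
  linarith

theorem PosDef.algebraMap_inv_le_inv (hA : A.PosDef) {Λ : ℝ} (hΛ : ∀ i, hA.1.eigenvalues i ≤ Λ) :
    algebraMap ℝ _ Λ⁻¹ ≤ A⁻¹ := by
  have hsa : IsSelfAdjoint A := hA.1
  rw [nonsing_inv_eq_ringInverse, ← cfc_ringInverse_id (R := ℝ) A hA.isUnit hsa]
  refine algebraMap_le_cfc _ _ _ (fun x hx => ?_) ?_ hsa
  · rw [hA.1.spectrum_real_eq_range_eigenvalues] at hx
    obtain ⟨i, rfl⟩ := hx
    exact inv_anti₀ (hA.eigenvalues_pos i) (hΛ i)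
  · exact continuousOn_inv₀.mono fun _ hx =>
      ne_of_mem_of_not_mem hx (spectrum.zero_notMem ℝ hA.isUnit)

theorem PosDef.exp_neg_re_dotProduct_inv_mulVec_le {S : Matrix n n ℂ} (hS : S.PosDef) {Λ : ℝ}
    (hΛ : ∀ i, hS.1.eigenvalues i ≤ Λ) (Z : n → ℂ) :
    rexp (-(star Z ⬝ᵥ S⁻¹ *ᵥ Z).re) ≤ ∏ j, rexp (-Λ⁻¹ * ‖Z j‖ ^ (2 : ℝ)) := by
  have hquad := le_re_dotProduct_mulVec_of_algebraMap_le (hS.algebraMap_inv_le_inv hΛ) Z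
  rw [← exp_sum, exp_le_exp]
  simp only [rpow_two, neg_mul, Finset.sum_neg_distrib, ← Finset.mul_sum]
  exact neg_le_neg hquad

end Matrix

theorem hole_prob_stmt_7_general (N : ℕ) (S : Matrix (Fin N) (Fin N) ℂ)
    (hS : S.PosDef) (Λ : ℝ)
    (hΛmax : ∀ i, hS.1.eigenvalues i ≤ Λ) (hΛmem : ∃ i, hS.1.eigenvalues i = Λ)
    (θ : ℝ) (hθ2 : θ < 2) :
    (∫ Z : Fin N → ℂ, (∏ j, ‖Z j‖ ^ (-θ)) *
        ((π ^ N * (S.det).re)⁻¹ * Real.exp (-(star Z ⬝ᵥ (S⁻¹).mulVec Z).re)))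
      ≤ (1 / (S.det).re) * (Λ ^ (1 - θ / 2) * Real.Gamma (1 - θ / 2)) ^ N := by
  have hdet : 0 < S.det.re := (Complex.pos_iff.1 hS.det_pos).1
  have hΛ : 0 < Λ := hΛmem.elim fun i hi => hi ▸ hS.eigenvalues_pos i
  set g : ℂ → ℝ := fun z => ‖z‖ ^ (-θ) * rexp (-Λ⁻¹ * ‖z‖ ^ (2 : ℝ))
  have hg : Integrable g :=
    Complex.integrable_rpow_mul_exp_neg_mul_rpow one_le_two (by linarith) (inv_pos.2 hΛ)
  calc _ ≤ ∫ Z : Fin N → ℂ, (π ^ N * S.det.re)⁻¹ * ∏ j, g (Z j) := by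
        refine integral_mono_of_nonneg (.of_forall fun Z => by positivity)
          ((Integrable.fintype_prod fun _ => hg).const_mul _) (.of_forall fun Z => ?_)
        dsimp only
        grw [hS.exp_neg_re_dotProduct_inv_mulVec_le hΛmax Z, Finset.prod_mul_distrib]
        exact (mul_left_comm _ _ _).le
    _ = (π ^ N * S.det.re)⁻¹ * (π * (Λ ^ (1 - θ / 2) * Real.Gamma (1 - θ / 2))) ^ N := by
        rw [integral_const_mul, integral_fintype_prod_volume_eq_pow, Fintype.card_fin,
          Complex.integral_rpow_neg_mul_exp_neg_inv_mul_sq hΛ hθ2]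
    _ = _ := by
        field_simp
        ring

/-- For a centered complex Gaussian vector (η₁,…,η_N) with positive definite covariance
matrix S, whose joint density on ℂ^N is `(π^N det S)⁻¹ exp(−⟨S⁻¹Z, Z⟩)`, and maximal
eigenvalue Λ of S, for every 0 ≤ θ < 2,
`E[∏ⱼ |ηⱼ|^{-θ}] ≤ (det S)⁻¹ (Λ^{1−θ/2} Γ(1−θ/2))^N`. -/
theorem hole_prob_stmt_7 (N : ℕ) (hN : 1 ≤ N) (S : Matrix (Fin N) (Fin N) ℂ)
    (hS : S.PosDef) (Λ : ℝ)
    (hΛmax : ∀ i, hS.1.eigenvalues i ≤ Λ) (hΛmem : ∃ i, hS.1.eigenvalues i = Λ)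
    (θ : ℝ) (hθ0 : 0 ≤ θ) (hθ2 : θ < 2) :
    (∫ Z : Fin N → ℂ, (∏ j, ‖Z j‖ ^ (-θ)) *
        ((π ^ N * (S.det).re)⁻¹ * Real.exp (-(star Z ⬝ᵥ (S⁻¹).mulVec Z).re)))
      ≤ (1 / (S.det).re) * (Λ ^ (1 - θ / 2) * Real.Gamma (1 - θ / 2)) ^ N :=
  hole_prob_stmt_7_general N S hS Λ hΛmax hΛmem θ hθ2
end

section
/- Let S be a complex polynomial of degree n ≥ 1 with S(0) ≠ 0, let k ≥ 4 be an integer, and let ω = e^{2πi/k}. Then there exists a universal constant C > 0 and τ ∈ ℂ with τ^{k²n} = 1 such that (1/k) Σ_{j=1}^k log|S(τω^j)| ≥ log|S(0)| − C/k². -/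
/-!
Put `Q(z) = ∏ⱼ S(ωʲ z)`. Its degree is at most `kn < k²n`, so averaging `Q` over the `k²n`-th roots
of unity returns `Q(0) = S(0)ᵏ`, and some root of unity `τ` has `|Q(τ)| ≥ |S(0)|ᵏ`. Taking logarithms
gives the bound even without the error term `C / k²`.
-/

open Finset Polynomial Real

theorem IsPrimitiveRoot.sum_pow_pow_eq_zero {R : Type*} [CommRing R] [IsDomain R] {ζ : R}
    {M i : ℕ} (hζ : IsPrimitiveRoot ζ M) (hi₀ : i ≠ 0) (hiM : i < M) :
    ∑ a ∈ range M, (ζ ^ a) ^ i = 0 := by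
  have hne : ζ ^ i ≠ 1 := hζ.pow_ne_one_of_pos_of_lt hi₀ hiM
  have hgeom : (1 - ζ ^ i) * ∑ a ∈ range M, (ζ ^ i) ^ a = 0 := by
    rw [mul_neg_geom_sum, ← pow_mul, mul_comm, pow_mul, hζ.pow_eq_one, one_pow, sub_self]
  simp_rw [← pow_mul, mul_comm _ i, pow_mul]
  exact (mul_eq_zero.mp hgeom).resolve_left (sub_ne_zero.mpr hne.symm)

namespace Polynomial

theorem sum_eval_pow_eq_of_natDegree_lt {R : Type*} [CommRing R] [IsDomain R] {ζ : R} {M : ℕ}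
    (hζ : IsPrimitiveRoot ζ M) {p : R[X]} (hp : p.natDegree < M) :
    ∑ a ∈ range M, p.eval (ζ ^ a) = M * p.eval 0 := by
  have hM : 0 ∈ range M := mem_range.mpr (p.natDegree.zero_le.trans_lt hp)
  calc ∑ a ∈ range M, p.eval (ζ ^ a)
      = ∑ i ∈ range M, p.coeff i * ∑ a ∈ range M, (ζ ^ a) ^ i := by
        simp_rw [eval_eq_sum_range' hp, mul_sum]
        exact sum_comm
    _ = p.coeff 0 * M := by
        rw [sum_eq_single_of_mem 0 hM fun i hi hi₀ => by
          rw [hζ.sum_pow_pow_eq_zero hi₀ (mem_range.mp hi), mul_zero]]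
        simp
    _ = M * p.eval 0 := by rw [coeff_zero_eq_eval_zero, mul_comm]

theorem exists_norm_eval_zero_le_norm_eval_pow {𝕜 : Type*} [RCLike 𝕜] {ζ : 𝕜} {M : ℕ}
    (hζ : IsPrimitiveRoot ζ M) {p : 𝕜[X]} (hp : p.natDegree < M) :
    ∃ a < M, ‖p.eval 0‖ ≤ ‖p.eval (ζ ^ a)‖ := by
  have hM : (range M).Nonempty := nonempty_range_iff.mpr (p.natDegree.zero_le.trans_lt hp).ne'
  have hsum : ∑ _a ∈ range M, ‖p.eval 0‖ ≤ ∑ a ∈ range M, ‖p.eval (ζ ^ a)‖ :=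
    calc ∑ _a ∈ range M, ‖p.eval 0‖ = ‖∑ a ∈ range M, p.eval (ζ ^ a)‖ := by
          rw [sum_eval_pow_eq_of_natDegree_lt hζ hp, norm_mul, RCLike.norm_natCast, sum_const,
            card_range, nsmul_eq_mul]
      _ ≤ ∑ a ∈ range M, ‖p.eval (ζ ^ a)‖ := norm_sum_le _ _
  simpa using exists_le_of_sum_le hM hsum

theorem natDegree_prod_comp_C_mul_X_le {R ι : Type*} [CommRing R] (p : R[X]) (s : Finset ι)
    (c : ι → R) : (∏ j ∈ s, p.comp (C (c j) * X)).natDegree ≤ #s * p.natDegree :=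
  calc (∏ j ∈ s, p.comp (C (c j) * X)).natDegree
      ≤ ∑ j ∈ s, (p.comp (C (c j) * X)).natDegree := natDegree_prod_le _ _
    _ ≤ ∑ _j ∈ s, p.natDegree := sum_le_sum fun j _ =>
        natDegree_comp_le.trans <| by
          simpa using Nat.mul_le_mul_left _ ((natDegree_C_mul_le _ X).trans natDegree_X_le)
    _ = #s * p.natDegree := by rw [sum_const, smul_eq_mul]

end Polynomial

theorem Real.card_mul_log_le_sum_log_of_pow_le_prod {ι : Type*} {s : Finset ι} {f : ι → ℝ} {b : ℝ}
    (hb : 0 < b) (h : b ^ #s ≤ ∏ i ∈ s, f i) : #s * log b ≤ ∑ i ∈ s, log (f i) := by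
  have hf : ∀ i ∈ s, f i ≠ 0 := fun i hi hfi => by
    rw [prod_eq_zero hi hfi] at h
    exact (pow_pos hb _).not_ge h
  rw [← log_prod hf, ← log_pow]
  exact log_le_log (pow_pos hb _) h

/-- For any polynomial S of degree n ≥ 1 with S(0) ≠ 0, any integer k ≥ 4 and
ω = e^{2πi/k}, there is τ with τ^{k²n} = 1 such that
(1/k) Σ_{j=1}^k log|S(τω^j)| ≥ log|S(0)| − C/k² for a universal constant C. -/
theorem hole_prob_stmt_9 :
    ∃ C > (0 : ℝ), ∀ (S : Polynomial ℂ) (n : ℕ), S.natDegree = n → 1 ≤ n →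
      S.eval 0 ≠ 0 → ∀ (k : ℕ), 4 ≤ k →
      ∃ τ : ℂ, τ ^ (k ^ 2 * n) = 1 ∧
        (1 / (k : ℝ)) * ∑ j ∈ Finset.Icc 1 k,
            Real.log ‖S.eval (τ * Complex.exp (2 * π * Complex.I / k) ^ j)‖
          ≥ Real.log ‖S.eval 0‖ - C / (k : ℝ) ^ 2 := by
  refine ⟨1, one_pos, fun S n hdeg hn hS0 k hk => ?_⟩
  set ω := Complex.exp (2 * π * Complex.I / k)
  set M := k ^ 2 * n
  set ζ := Complex.exp (2 * π * Complex.I / M)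
  have hζ : IsPrimitiveRoot ζ M := Complex.isPrimitiveRoot_exp M (by positivity)
  set Q := ∏ j ∈ Icc 1 k, S.comp (C (ω ^ j) * X)
  have hQ : Q.natDegree < M :=
    calc Q.natDegree ≤ #(Icc 1 k) * S.natDegree := S.natDegree_prod_comp_C_mul_X_le _ _
      _ = k * n := by rw [Nat.card_Icc, Nat.add_sub_cancel, hdeg]
      _ < M := Nat.mul_lt_mul_of_pos_right (by nlinarith) hn
  obtain ⟨a, -, ha⟩ := exists_norm_eval_zero_le_norm_eval_pow hζ hQ
  refine ⟨ζ ^ a, by rw [← pow_mul, mul_comm, pow_mul, hζ.pow_eq_one, one_pow], ?_⟩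
  have hsum := card_mul_log_le_sum_log_of_pow_le_prod (norm_pos_iff.mpr hS0) (s := Icc 1 k)
    (f := fun j => ‖S.eval (ω ^ j * ζ ^ a)‖) (by
      simpa only [Q, eval_prod, eval_comp, eval_mul, eval_C, eval_X, mul_zero, prod_const,
        Nat.card_Icc, Nat.add_sub_cancel, norm_prod, norm_pow] using ha)
  rw [Nat.card_Icc, Nat.add_sub_cancel] at hsum
  simp_rw [mul_comm (ζ ^ a)]
  have hk₀ : (0 : ℝ) < k := by positivity
  calc Real.log ‖S.eval 0‖ - 1 / (k : ℝ) ^ 2 ≤ Real.log ‖S.eval 0‖ := by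
        linarith [show 0 < 1 / (k : ℝ) ^ 2 by positivity]
    _ ≤ 1 / k * ∑ j ∈ Icc 1 k, Real.log ‖S.eval (ω ^ j * ζ ^ a)‖ := by
        rw [one_div, le_inv_mul_iff₀ hk₀]; exact hsum
end

section
/- Let L > 1, let a_n² = Γ(n+L)/(Γ(L)Γ(n+1)), and for 0 < r < 1 set S(r) = Σ_{n≥0} max(log(a_n² r^{2n}), 0). Then as r ↑ 1, S(r) = ((L−1)²/4 + o(1)) · (1/(1−r)) · (log(1/(1−r)))². -/
/-!
Put `s = -2 log r`, so that `log (aₙ² r^{2n}) = log aₙ² - n s`, and `λ = log (1/s)`. Log-convexity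
of `Γ` gives `log aₙ² = (L - 1) log (n + 1) + O(1)`. For any `f n = A log (n + 1) + O(1)` the sum
`Σ (f n - n s)₊` is `(A²/2 + o(1)) λ² / s`: from below, keep its first `⌊A λ / s⌋` terms and use
`log M! ≥ M log M - M`; from above, replace `log` by its tangent line at `A λ / s`, which leaves
the positive part of an arithmetic progression. Finally `s ~ 2 (1 - r)` and `log s ~ log (1 - r)`.
-/

open Real Filter Topology Finset

lemma max_zero_le_sq_sub_sq_div {x t : ℝ} (ht : 0 < t) :
    max x 0 ≤ (max (x + t) 0 ^ 2 - max (x - t) 0 ^ 2) / (4 * t) := by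
  rw [le_div_iff₀ (by positivity)]
  rcases le_total x 0 with hx | hx
  · rw [max_eq_right hx, zero_mul, sub_nonneg]
    exact pow_le_pow_left₀ (le_max_right _ _) (max_le_max_right 0 (by linarith)) 2
  · rw [max_eq_left hx, max_eq_left (by linarith)]
    rcases le_total (x - t) 0 with hxt | hxt
    · rw [max_eq_right hxt]
      nlinarith
    · rw [max_eq_left hxt]
      nlinarith

lemma sum_range_max_sub_mul_le {B s : ℝ} (hs : 0 < s) (hB : 0 ≤ B) (K : ℕ) :
    ∑ n ∈ range K, max (B - n * s) 0 ≤ (B + s / 2) ^ 2 / (2 * s) := by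
  -- `max_zero_le_sq_sub_sq_div` with `t = s / 2` makes the sum telescope
  let ψ : ℕ → ℝ := fun n => max (B - n * s + s / 2) 0 ^ 2 / (2 * s)
  have hstep (n : ℕ) : max (B - n * s) 0 ≤ ψ n - ψ (n + 1) := by
    have := max_zero_le_sq_sub_sq_div (x := B - n * s) (half_pos hs)
    rwa [show 4 * (s / 2) = 2 * s by ring, sub_div,
      show B - n * s - s / 2 = B - ((n + 1 : ℕ) : ℝ) * s + s / 2 by push_cast; ring] at this
  calc ∑ n ∈ range K, max (B - n * s) 0
      ≤ ∑ n ∈ range K, (ψ n - ψ (n + 1)) := sum_le_sum fun n _ => hstep n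
    _ = ψ 0 - ψ K := sum_range_sub' ψ K
    _ ≤ ψ 0 := sub_le_self _ (by positivity)
    _ = (B + s / 2) ^ 2 / (2 * s) := by
      simp only [ψ, Nat.cast_zero, zero_mul, sub_zero]
      rw [max_eq_left (by positivity)]

lemma sum_range_max_sub_mul_le_of_le_log {f : ℕ → ℝ} {A c s N : ℝ} (hA : 0 ≤ A)
    (hf : ∀ n, f n ≤ A * log (n + 1) + c) (hN : 1 ≤ N) (hsN : A / N < s)
    (hB : 0 ≤ A * log N + c) (K : ℕ) :
    ∑ n ∈ range K, max (f n - n * s) 0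
      ≤ (A * log N + c + (s - A / N) / 2) ^ 2 / (2 * (s - A / N)) := by
  refine (sum_le_sum fun n _ => max_le_max_right 0 ?_).trans
    (sum_range_max_sub_mul_le (sub_pos.2 hsN) hB K)
  have htangent : log (n + 1) ≤ log N + (n + 1) / N - 1 := by
    have := log_le_sub_one_of_pos (x := (n + 1) / N) (by positivity)
    rw [log_div (by positivity) (by positivity)] at this
    linarith
  have hAN : A / N ≤ A := div_le_self hA hN
  have := mul_le_mul_of_nonneg_left htangent hA
  have := hf n
  have : A * ((n + 1) / N) = n * (A / N) + A / N := by field_simp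
  nlinarith

lemma sum_range_natCast_le (M : ℕ) : ∑ n ∈ range M, (n : ℝ) ≤ M ^ 2 / 2 := by
  induction M with
  | zero => simp
  | succ M ih => rw [sum_range_succ]; push_cast; nlinarith

lemma mul_log_sub_le_sum_range_log (M : ℕ) : M * log M - M ≤ ∑ n ∈ range M, log (n + 1) := by
  rcases eq_or_ne M 0 with rfl | hM
  · simp
  have hlog : ∑ n ∈ range M, log ((n : ℝ) + 1) = log (M.factorial) := by
    rw [← prod_range_add_one_eq_factorial, Nat.cast_prod, log_prod (fun n _ => by positivity)]
    push_cast; rfl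
  have := Stirling.le_log_factorial_stirling hM
  have : 0 ≤ log (M : ℝ) := log_natCast_nonneg M
  have : 0 ≤ log (2 * π) := log_nonneg (by linarith [pi_gt_three])
  linarith

lemma le_sum_range_max_sub_mul_of_log_le {f : ℕ → ℝ} {A c s : ℝ} (hA : 0 ≤ A) (hs : 0 ≤ s)
    (hf : ∀ n : ℕ, A * log (n + 1) - c ≤ f n) (M : ℕ) :
    A * M * log M - (A + c) * M - s * M ^ 2 / 2 ≤ ∑ n ∈ range M, max (f n - n * s) 0 :=
  calc A * M * log M - (A + c) * M - s * M ^ 2 / 2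
      ≤ A * ∑ n ∈ range M, log (n + 1) - c * M - s * ∑ n ∈ range M, (n : ℝ) := by
        have := mul_le_mul_of_nonneg_left (mul_log_sub_le_sum_range_log M) hA
        have := mul_le_mul_of_nonneg_left (sum_range_natCast_le M) hs
        linarith
    _ = ∑ n ∈ range M, (A * log (n + 1) - c - n * s) := by
        simp only [sum_sub_distrib, mul_sum, sum_const, card_range, nsmul_eq_mul]
        ring_nf
    _ ≤ ∑ n ∈ range M, max (f n - n * s) 0 :=
        sum_le_sum fun n _ => le_max_of_le_left (by linarith [hf n])

lemma tendsto_neg_log_nhdsGT_zero : Tendsto (fun s : ℝ => -log s) (𝓝[>] 0) atTop :=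
  tendsto_neg_atBot_atTop.comp tendsto_log_nhdsGT_zero

lemma tendsto_log_div_neg_log_of_tendsto {g : ℝ → ℝ} {a : ℝ} (ha : 0 < a)
    (hg : Tendsto (fun s => s * g s / -log s) (𝓝[>] 0) (𝓝 a)) :
    Tendsto (fun s => log (g s) / -log s) (𝓝[>] 0) (𝓝 1) := by
  have hlog := tendsto_neg_log_nhdsGT_zero
  have hlim : Tendsto (fun s => log (s * g s / -log s) * (-log s)⁻¹ + log (-log s) / -log s + 1)
      (𝓝[>] 0) (𝓝 (log a * 0 + 0 + 1)) :=
    ((((continuousAt_log ha.ne').tendsto.comp hg).mul hlog.inv_tendsto_atTop).add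
      ((isLittleO_log_id_atTop.tendsto_div_nhds_zero).comp hlog)).add tendsto_const_nhds
  rw [mul_zero, zero_add, zero_add] at hlim
  refine hlim.congr' ?_
  filter_upwards [self_mem_nhdsWithin, hlog.eventually_gt_atTop 0,
    hg.eventually (lt_mem_nhds ha)] with s (hs : 0 < s) hlogs hgs
  have hgpos : 0 < g s := by
    have := mul_pos hgs hlogs
    rw [div_mul_cancel₀ _ hlogs.ne'] at this
    exact pos_of_mul_pos_right this hs.le
  rw [log_div (by positivity) hlogs.ne', log_mul hs.ne' hgpos.ne']
  have : log s ≠ 0 := by linarith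
  field_simp
  ring

lemma tendsto_upper_bound_mul_div_log_sq {A : ℝ} (hA : 0 < A) (c : ℝ) :
    Tendsto (fun s => (A * log (A * -log s / s) + c + (s - s / -log s) / 2) ^ 2
      / (2 * (s - s / -log s)) * s / log s ^ 2) (𝓝[>] 0) (𝓝 (A ^ 2 / 2)) := by
  have hlog := tendsto_neg_log_nhdsGT_zero
  have hinv := hlog.inv_tendsto_atTop
  have hN : Tendsto (fun s => log (A * -log s / s) / -log s) (𝓝[>] 0) (𝓝 1) := by
    refine tendsto_log_div_neg_log_of_tendsto hA (tendsto_const_nhds.congr' ?_)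
    filter_upwards [self_mem_nhdsWithin, hlog.eventually_gt_atTop 0] with s (hs : 0 < s) hlogs
    have : log s ≠ 0 := by linarith
    field_simp
  have hlim : Tendsto (fun s => (A * (log (A * -log s / s) / -log s) + c * (-log s)⁻¹
      + s * (1 - (-log s)⁻¹) * (-log s)⁻¹ / 2) ^ 2 / (2 * (1 - (-log s)⁻¹))) (𝓝[>] 0)
      (𝓝 ((A * 1 + c * 0 + 0 * (1 - 0) * 0 / 2) ^ 2 / (2 * (1 - 0)))) :=
    ((((tendsto_const_nhds.mul hN).add (tendsto_const_nhds.mul hinv)).add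
      ((((tendsto_nhdsWithin_of_tendsto_nhds tendsto_id).mul
        (tendsto_const_nhds.sub hinv)).mul hinv).div_const 2)).pow 2).div
      (tendsto_const_nhds.mul (tendsto_const_nhds.sub hinv)) (by norm_num)
  rw [show (A * 1 + c * 0 + 0 * (1 - 0) * 0 / 2) ^ 2 / (2 * (1 - 0)) = A ^ 2 / 2 by ring] at hlim
  refine hlim.congr' ?_
  filter_upwards [self_mem_nhdsWithin, hlog.eventually_gt_atTop 1] with s (hs : 0 < s) hlogs
  have : log s ≠ 0 := by linarith
  have : 1 + log s ≠ 0 := by linarith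
  field_simp
  ring

lemma tendsto_lower_bound_mul_div_log_sq {A : ℝ} (hA : 0 < A) (c : ℝ) :
    Tendsto (fun s => (A * ⌊A * -log s / s⌋₊ * log ⌊A * -log s / s⌋₊
      - (A + c) * ⌊A * -log s / s⌋₊ - s * (⌊A * -log s / s⌋₊ : ℝ) ^ 2 / 2) * s / log s ^ 2)
      (𝓝[>] 0) (𝓝 (A ^ 2 / 2)) := by
  have hlog := tendsto_neg_log_nhdsGT_zero
  have hinv := hlog.inv_tendsto_atTop
  have hM : Tendsto (fun s => s * ⌊A * -log s / s⌋₊ / -log s) (𝓝[>] 0) (𝓝 A) := by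
    have hlow : Tendsto (fun s => A - s * (-log s)⁻¹) (𝓝[>] 0) (𝓝 (A - 0 * 0)) :=
      tendsto_const_nhds.sub ((tendsto_nhdsWithin_of_tendsto_nhds tendsto_id).mul hinv)
    rw [zero_mul, sub_zero] at hlow
    refine tendsto_of_tendsto_of_tendsto_of_le_of_le' hlow tendsto_const_nhds ?_ ?_ <;>
    filter_upwards [self_mem_nhdsWithin, hlog.eventually_gt_atTop 0] with s (hs : 0 < s) hlogs
    · have := mul_le_mul_of_nonneg_left (Nat.lt_floor_add_one (A * -log s / s)).le hs.le
      rw [mul_add, mul_div_cancel₀ _ hs.ne'] at this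
      rw [le_div_iff₀ hlogs, sub_mul, inv_mul_cancel_right₀ hlogs.ne']
      linarith
    · have := mul_le_mul_of_nonneg_left
        (Nat.floor_le (show 0 ≤ A * -log s / s by positivity)) hs.le
      rw [mul_div_cancel₀ _ hs.ne'] at this
      rwa [div_le_iff₀ hlogs]
  have hlim : Tendsto (fun s => A * (s * ⌊A * -log s / s⌋₊ / -log s)
      * (log ⌊A * -log s / s⌋₊ / -log s) - (A + c) * (s * ⌊A * -log s / s⌋₊ / -log s)
      * (-log s)⁻¹ - (s * ⌊A * -log s / s⌋₊ / -log s) ^ 2 / 2) (𝓝[>] 0)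
      (𝓝 (A * A * 1 - (A + c) * A * 0 - A ^ 2 / 2)) :=
    (((tendsto_const_nhds.mul hM).mul (tendsto_log_div_neg_log_of_tendsto hA hM)).sub
      ((tendsto_const_nhds.mul hM).mul hinv)).sub ((hM.pow 2).div_const 2)
  rw [show A * A * 1 - (A + c) * A * 0 - A ^ 2 / 2 = A ^ 2 / 2 by ring] at hlim
  refine hlim.congr' ?_
  filter_upwards [self_mem_nhdsWithin, hlog.eventually_gt_atTop 0] with s (hs : 0 < s) hlogs
  have : log s ≠ 0 := by linarith
  field_simp

theorem tendsto_tsum_max_sub_mul_mul_div_log_sq {f : ℕ → ℝ} {A C : ℝ} (hA : 0 < A)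
    (hf : ∀ n, |f n - A * log (n + 1)| ≤ C) :
    Tendsto (fun s => (∑' n : ℕ, max (f n - n * s) 0) * s / log s ^ 2) (𝓝[>] 0)
      (𝓝 (A ^ 2 / 2)) := by
  have hfC (n : ℕ) := abs_le.1 (hf n)
  have hlog := tendsto_neg_log_nhdsGT_zero
  have hN : Tendsto (fun s => A * -log s / s) (𝓝[>] 0) atTop := by
    refine ((hlog.atTop_mul_atTop₀ tendsto_inv_nhdsGT_zero).const_mul_atTop hA).congr fun s => ?_
    ring
  have hbounds : ∀ᶠ s in 𝓝[>] 0,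
      (A * ⌊A * -log s / s⌋₊ * log ⌊A * -log s / s⌋₊ - (A + C) * ⌊A * -log s / s⌋₊
        - s * (⌊A * -log s / s⌋₊ : ℝ) ^ 2 / 2) * s / log s ^ 2
        ≤ (∑' n : ℕ, max (f n - n * s) 0) * s / log s ^ 2 ∧
      (∑' n : ℕ, max (f n - n * s) 0) * s / log s ^ 2
        ≤ (A * log (A * -log s / s) + C + (s - s / -log s) / 2) ^ 2
          / (2 * (s - s / -log s)) * s / log s ^ 2 := by
    filter_upwards [self_mem_nhdsWithin, hlog.eventually_gt_atTop 1, hN.eventually_ge_atTop 1,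
      (tendsto_log_atTop.comp hN).eventually_ge_atTop (-C / A)] with s (hs : 0 < s) hlogs hN1 hNC
    have hAN : A / (A * -log s / s) = s / -log s := by field_simp
    have hpartial (K : ℕ) := hAN ▸ sum_range_max_sub_mul_le_of_le_log (f := f) (c := C) hA.le
      (fun n => by linarith [hfC n]) hN1 (by rw [hAN]; exact div_lt_self hs hlogs)
      (by rw [Function.comp_apply, div_le_iff₀' hA] at hNC; linarith) K
    have hnonneg (n : ℕ) : 0 ≤ max (f n - n * s) 0 := le_max_right _ _
    have hsum := summable_of_sum_range_le hnonneg hpartial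
    constructor <;> gcongr
    · exact (le_sum_range_max_sub_mul_of_log_le (c := C) hA.le hs.le
        (fun n => by linarith [hfC n]) _).trans (hsum.sum_le_tsum _ fun n _ => hnonneg n)
    · exact Real.tsum_le_of_sum_range_le hnonneg hpartial
  exact tendsto_of_tendsto_of_tendsto_of_le_of_le' (tendsto_lower_bound_mul_div_log_sq hA C)
    (tendsto_upper_bound_mul_div_log_sq hA C) (hbounds.mono fun _ h => h.1)
    (hbounds.mono fun _ h => h.2)

lemma log_Gamma_add_one {y : ℝ} (hy : 0 < y) : log (Gamma (y + 1)) = log (Gamma y) + log y := by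
  rw [Gamma_add_one hy.ne', log_mul hy.ne' (Gamma_pos_of_pos hy).ne', add_comm]

lemma log_Gamma_add_sub_le {x d : ℝ} (hx : 0 < x) (hd : 0 < d) :
    log (Gamma (x + d)) - log (Gamma x) ≤ d * log (x + d) := by
  have := convexOn_log_Gamma.slope_mono_adjacent (x := x) (y := x + d) (z := x + d + 1)
    hx (by simp only [Set.mem_Ioi]; linarith) (by linarith) (by linarith)
  simp only [Function.comp_apply, log_Gamma_add_one (by linarith : 0 < x + d),
    add_sub_cancel_left, div_one] at this
  rwa [div_le_iff₀ hd, mul_comm] at this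

lemma mul_log_sub_one_le_log_Gamma_add_sub {x d : ℝ} (hx : 1 < x) (hd : 0 < d) :
    d * log (x - 1) ≤ log (Gamma (x + d)) - log (Gamma x) := by
  have := convexOn_log_Gamma.slope_mono_adjacent (x := x - 1) (y := x) (z := x + d)
    (by simp only [Set.mem_Ioi]; linarith) (by simp only [Set.mem_Ioi]; linarith)
    (by linarith) (by linarith)
  have hstep : log (Gamma x) - log (Gamma (x - 1)) = log (x - 1) := by
    have := log_Gamma_add_one (by linarith : 0 < x - 1)
    rw [sub_add_cancel] at this
    linarith
  simp only [Function.comp_apply, sub_sub_cancel, div_one, add_sub_cancel_left] at this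
  rwa [hstep, le_div_iff₀ hd, mul_comm] at this

lemma abs_log_Gamma_ratio_sub_mul_log_le {L : ℝ} (hL : 1 < L) (n : ℕ) :
    |log (Gamma (n + L) / (Gamma L * Gamma (n + 1))) - (L - 1) * log (n + 1)|
      ≤ (L - 1) * log (2 * L) + |log (Gamma L)| := by
  have hL0 : 0 < L := by linarith
  rw [log_div (Gamma_pos_of_pos (by positivity)).ne'
      (mul_pos (Gamma_pos_of_pos hL0) (Gamma_pos_of_pos (by positivity))).ne',
    log_mul (Gamma_pos_of_pos hL0).ne' (Gamma_pos_of_pos (by positivity)).ne']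
  have hshift : (n : ℝ) + L = (n + 1) + (L - 1) := by ring
  have hC : 0 ≤ (L - 1) * log (2 * L) := mul_nonneg (by linarith) (log_nonneg (by linarith))
  have hGL := le_abs_self (log (Gamma L))
  have hGL' := neg_abs_le (log (Gamma L))
  rw [abs_le]
  constructor
  · rcases Nat.eq_zero_or_pos n with rfl | hn
    · simp only [Nat.cast_zero, zero_add, Gamma_one, log_one]
      linarith
    have hn1 : (1 : ℝ) ≤ n := by exact_mod_cast hn
    have hlow := mul_log_sub_one_le_log_Gamma_add_sub (x := n + 1) (d := L - 1)
      (by linarith) (by linarith)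
    rw [← hshift, add_sub_cancel_right] at hlow
    have hlogn : log (n + 1) - log 2 ≤ log n := by
      rw [← log_div (by positivity) two_ne_zero]
      exact log_le_log (by positivity) (by linarith)
    have := mul_le_mul_of_nonneg_left hlogn (by linarith : 0 ≤ L - 1)
    have := mul_le_mul_of_nonneg_left (log_le_log two_pos (by linarith : 2 ≤ 2 * L))
      (by linarith : 0 ≤ L - 1)
    nlinarith
  · have hup := log_Gamma_add_sub_le (x := n + 1) (d := L - 1) (by positivity) (by linarith)
    rw [← hshift] at hup
    have hlognL : log (n + L) ≤ log (n + 1) + log L := by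
      rw [← log_mul (by positivity) hL0.ne']
      exact log_le_log (by positivity) (by nlinarith [(n.cast_nonneg : (0 : ℝ) ≤ n)])
    have := mul_le_mul_of_nonneg_left hlognL (by linarith : 0 ≤ L - 1)
    have := mul_le_mul_of_nonneg_left (log_le_log hL0 (by linarith : L ≤ 2 * L))
      (by linarith : 0 ≤ L - 1)
    nlinarith

lemma tendsto_one_sub_div_neg_log : Tendsto (fun r => (1 - r) / -log r) (𝓝[≠] 1) (𝓝 1) := by
  have hslope := (hasDerivAt_iff_tendsto_slope.1 (hasDerivAt_log one_ne_zero)).inv₀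
    (by norm_num)
  rw [inv_inv] at hslope
  refine hslope.congr fun r => ?_
  rw [slope_def_field, log_one, sub_zero, inv_div, ← neg_sub, div_neg, neg_div]

lemma tendsto_neg_two_mul_log_nhdsLT_one :
    Tendsto (fun r => -2 * log r) (𝓝[<] 1) (𝓝[>] 0) := by
  refine tendsto_nhdsWithin_iff.2 ⟨?_, ?_⟩
  · have := ((continuousAt_log one_ne_zero).tendsto.const_mul (-2)).mono_left
      (nhdsWithin_le_nhds (s := Set.Iio 1))
    rwa [log_one, mul_zero] at this
  · filter_upwards [Ioo_mem_nhdsLT (show (0 : ℝ) < 1 by norm_num)] with r ⟨hr0, hr1⟩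
    have := log_neg hr0 hr1
    exact Set.mem_Ioi.2 (by linarith)

lemma tendsto_log_neg_two_mul_log_div_log_one_sub :
    Tendsto (fun r => log (-2 * log r) / log (1 - r)) (𝓝[<] 1) (𝓝 1) := by
  have hgap : Tendsto (fun r : ℝ => 1 - r) (𝓝[<] 1) (𝓝[>] 0) := by
    refine tendsto_nhdsWithin_iff.2 ⟨?_, eventually_nhdsWithin_of_forall fun r hr => ?_⟩
    · have : Tendsto (fun r : ℝ => 1 - r) (𝓝 1) (𝓝 (1 - 1)) := tendsto_const_nhds.sub tendsto_id
      rw [sub_self] at this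
      exact this.mono_left nhdsWithin_le_nhds
    · exact sub_pos.2 (Set.mem_Iio.1 hr)
  have hratio : Tendsto (fun r => 2 / ((1 - r) / -log r)) (𝓝[<] 1) (𝓝 (2 / 1)) :=
    tendsto_const_nhds.div (tendsto_one_sub_div_neg_log.mono_left
      (nhdsWithin_mono _ fun r hr => ne_of_lt hr)) one_ne_zero
  have hlim : Tendsto (fun r => log (2 / ((1 - r) / -log r)) * (log (1 - r))⁻¹ + 1) (𝓝[<] 1)
      (𝓝 (log (2 / 1) * 0 + 1)) :=
    (((continuousAt_log (by norm_num)).tendsto.comp hratio).mul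
      (tendsto_log_nhdsGT_zero.comp hgap).inv_tendsto_atBot).add tendsto_const_nhds
  rw [mul_zero, zero_add] at hlim
  refine hlim.congr' ?_
  filter_upwards [Ioo_mem_nhdsLT (show (0 : ℝ) < 1 by norm_num)] with r ⟨hr0, hr1⟩
  have hlogr : log r < 0 := log_neg hr0 hr1
  have hlog1r : log (1 - r) < 0 := log_neg (by linarith) (by linarith)
  have hsplit : -2 * log r = 2 / ((1 - r) / -log r) * (1 - r) := by
    field_simp
  rw [hsplit, log_mul (div_pos two_pos (div_pos (by linarith) (by linarith))).ne' (by linarith)]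
  field_simp [hlog1r.ne]

/-- For L > 1, aₙ² = Γ(n+L)/(Γ(L)Γ(n+1)) and S(r) = Σₙ log₊(aₙ² r^{2n}), one has
S(r) = ((L−1)²/4 + o(1)) (1/(1−r)) log²(1/(1−r)) as r ↑ 1. -/
theorem hole_prob_stmt_15 (L : ℝ) (hL : 1 < L) :
    Tendsto (fun r : ℝ =>
        (∑' n : ℕ, max (Real.log
            (Real.Gamma (n + L) / (Real.Gamma L * Real.Gamma (n + 1)) * r ^ (2 * n))) 0)
          * (1 - r) / (Real.log (1 / (1 - r))) ^ 2)
      (nhdsWithin 1 (Set.Ioo (0 : ℝ) 1)) (𝓝 ((L - 1) ^ 2 / 4)) := by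
  have hs := tendsto_neg_two_mul_log_nhdsLT_one
  have hcore := (tendsto_tsum_max_sub_mul_mul_div_log_sq (sub_pos.2 hL)
    (abs_log_Gamma_ratio_sub_mul_log_le hL)).comp hs
  have hlim := (hcore.mul ((tendsto_one_sub_div_neg_log.mono_left
    (nhdsWithin_mono _ fun r hr => ne_of_lt hr)).div_const 2)).mul
    (tendsto_log_neg_two_mul_log_div_log_one_sub.pow 2)
  rw [show (L - 1) ^ 2 / 2 * (1 / 2) * 1 ^ 2 = (L - 1) ^ 2 / 4 by ring] at hlim
  have hIoo : 𝓝[Set.Ioo 0 1] (1 : ℝ) ≤ 𝓝[<] 1 := nhdsWithin_mono _ Set.Ioo_subset_Iio_self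
  refine (hlim.mono_left hIoo).congr' ?_
  filter_upwards [self_mem_nhdsWithin, hIoo (hs.eventually (Ioo_mem_nhdsGT zero_lt_one))]
    with r ⟨hr0, hr1⟩ ⟨hs0, hs1⟩
  have hterm (n : ℕ) : log (Gamma (n + L) / (Gamma L * Gamma (n + 1)) * r ^ (2 * n))
      = log (Gamma (n + L) / (Gamma L * Gamma (n + 1))) - n * (-2 * log r) := by
    rw [log_mul _ (pow_ne_zero _ hr0.ne'), log_pow]
    · push_cast; ring
    · exact (div_pos (Gamma_pos_of_pos (by positivity))
        (mul_pos (Gamma_pos_of_pos (by linarith)) (Gamma_pos_of_pos (by positivity)))).ne'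
  have hlog1r : log (1 - r) ≠ 0 := (log_neg (by linarith) (by linarith)).ne
  simp only [Function.comp_apply, hterm, one_div, log_inv]
  generalize (∑' n : ℕ, max (_ : ℝ) 0) = X
  set s := -2 * log r
  have hlogs : log s ≠ 0 := (log_neg hs0 hs1).ne
  rw [show (1 - r) / -log r / 2 = (1 - r) / s by ring]
  field_simp
end

section
/- Let L > 1 and a_n² = Γ(n+L)/(Γ(L)Γ(n+1)). For 0 < δ ≤ 1 set r₁ = 1 − δ/2 and N = ⌊(2L/δ) log(1/δ)⌋. Then there is a constant C > 0 (depending only on L) such that for all sufficiently small δ, Σ_{n>N} a_n² r₁^{2n} ≤ C δ^{L−1}; in particular the tail sum is bounded by a constant. -/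
open Real


lemma gamma_prod_aux (L : ℝ) (hL : 0 < L) (n : ℕ) :
    Real.Gamma (n + L) = Real.Gamma L * ∏ k ∈ Finset.range n, (L + k) := by
  induction n with
  | zero => simp
  | succ n ih =>
    have h : ((n + 1 : ℕ) : ℝ) + L = ((n : ℝ) + L) + 1 := by push_cast; ring
    have hpos : (0:ℝ) < (n : ℝ) + L := by positivity
    rw [h, Real.Gamma_add_one (ne_of_gt hpos), ih, Finset.prod_range_succ]
    ring

lemma asc_prod_aux (M n : ℕ) :
    ((M.ascFactorial n : ℕ) : ℝ) = ∏ k ∈ Finset.range n, ((M : ℝ) + k) := by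
  induction n with
  | zero => simp
  | succ n ih =>
    rw [Nat.ascFactorial_succ, Finset.prod_range_succ, Nat.cast_mul, ih]
    push_cast; ring

lemma coeff_le_choose (L : ℝ) (hL : 1 < L) (m n : ℕ) (hm : L ≤ (m : ℝ) + 1) :
    Real.Gamma (n + L) / (Real.Gamma L * Real.Gamma (n + 1)) ≤ ((n + m).choose m : ℝ) := by
  have hL0 : (0:ℝ) < L := lt_trans one_pos hL
  have hGL : 0 < Real.Gamma L := Real.Gamma_pos_of_pos hL0
  have hfact : Real.Gamma ((n:ℝ) + 1) = (n.factorial : ℝ) := Real.Gamma_nat_eq_factorial n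
  have hfpos : (0:ℝ) < (n.factorial : ℝ) := by positivity
  have hprod : ∏ k ∈ Finset.range n, (L + k) ≤ ∏ k ∈ Finset.range n, (((m:ℝ) + 1) + k) := by
    apply Finset.prod_le_prod
    · intro k _; positivity
    · intro k _; linarith
  have hsymm : (m + n).choose n = (n + m).choose m := by
    have h1 : (n + m).choose ((n + m) - n) = (n + m).choose n := Nat.choose_symm (Nat.le_add_right n m)
    simp only [Nat.add_sub_cancel_left] at h1
    rw [Nat.add_comm m n]
    exact h1.symm
  have hasc : (((m + 1 : ℕ)).ascFactorial n : ℝ) = (n.factorial : ℝ) * ((n + m).choose m : ℝ) := by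
    rw [Nat.ascFactorial_eq_factorial_mul_choose, hsymm]
    push_cast; ring
  have hcast : ((m:ℝ) + 1) = ((m + 1 : ℕ) : ℝ) := by push_cast; ring
  rw [gamma_prod_aux L hL0 n, hfact]
  rw [div_le_iff₀ (by positivity)]
  calc Real.Gamma L * ∏ k ∈ Finset.range n, (L + k)
      ≤ Real.Gamma L * ∏ k ∈ Finset.range n, (((m:ℝ) + 1) + k) := by
        apply mul_le_mul_of_nonneg_left hprod hGL.le
    _ = Real.Gamma L * ((n.factorial : ℝ) * ((n + m).choose m : ℝ)) := by
        rw [hcast, ← asc_prod_aux, hasc]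
    _ = ((n + m).choose m : ℝ) * (Real.Gamma L * (n.factorial : ℝ)) := by ring

set_option maxHeartbeats 1000000 in
/-- For L > 1, aₙ² = Γ(n+L)/(Γ(L)Γ(n+1)), r₁ = 1 − δ/2 and N = ⌊(2L/δ)log(1/δ)⌋:
there is C > 0 (depending only on L) with Σ_{n>N} aₙ² r₁^{2n} ≤ C δ^{L−1}
for all sufficiently small δ > 0. -/
theorem hole_prob_stmt_16 (L : ℝ) (hL : 1 < L) :
    ∃ C > (0 : ℝ), ∃ δ₀ > (0 : ℝ), ∀ δ : ℝ, 0 < δ → δ ≤ δ₀ →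
      (∑' n : ℕ, if ⌊(2 * L / δ) * Real.log (1 / δ)⌋₊ < n
          then Real.Gamma (n + L) / (Real.Gamma L * Real.Gamma (n + 1)) * (1 - δ / 2) ^ (2 * n)
          else 0)
        ≤ C * δ ^ (L - 1) := by
  have hL0 : (0:ℝ) < L := lt_trans one_pos hL
  obtain ⟨m, hm⟩ : ∃ m : ℕ, m + 1 = ⌈L⌉₊ :=
    ⟨⌈L⌉₊ - 1, Nat.succ_pred_eq_of_pos (Nat.ceil_pos.mpr hL0)⟩
  have hLm : L ≤ (m:ℝ) + 1 := by
    have h := Nat.le_ceil L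
    rw [← hm] at h; push_cast at h; linarith
  have hmL : ((m:ℝ) + 1) < L + 1 := by
    have h := Nat.ceil_lt_add_one hL0.le
    rw [← hm] at h; push_cast at h; linarith
  set α : ℝ := L - (m:ℝ) with hαdef
  have hα0 : 0 < α := by rw [hαdef]; linarith
  have hα1 : α ≤ 1 := by rw [hαdef]; linarith
  set ε : ℝ := α / (8 * L) with hεdef
  have hε0 : 0 < ε := by positivity
  have hε8 : ε ≤ 1 / 8 := by
    rw [hεdef, div_le_div_iff₀ (by positivity) (by norm_num)]
    nlinarith
  refine ⟨3 / ε ^ (m + 1), by positivity, min 1 (α / L), by positivity, ?_⟩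
  intro δ hδ hδ0
  have hδ1 : δ ≤ 1 := le_trans hδ0 (min_le_left _ _)
  have hδα : δ ≤ α / L := le_trans hδ0 (min_le_right _ _)
  have hδαL : L * δ ≤ α := by
    have := (le_div_iff₀ hL0).mp hδα
    linarith
  set N : ℕ := ⌊(2 * L / δ) * Real.log (1 / δ)⌋₊ with hN
  set r : ℝ := 1 - δ / 2 with hr
  set ρ : ℝ := 1 - ε * δ with hρ
  have hεδ : ε * δ ≤ 1 / 8 := by nlinarith
  have hr0 : 0 < r := by rw [hr]; linarith
  have hρ0 : 0 < ρ := by rw [hρ]; linarith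
  have hρ1 : ρ < 1 := by rw [hρ]; nlinarith
  have hr2ρ : r ^ 2 ≤ ρ := by rw [hr, hρ]; nlinarith
  set q : ℝ := r ^ 2 / ρ with hq
  have hq0 : 0 < q := by positivity
  have hq1 : q ≤ 1 := (div_le_one hρ0).mpr hr2ρ
  -- the dominating geometric series
  have hgs : HasSum (fun n : ℕ ↦ ((n + m).choose m : ℝ) * ρ ^ n) (1 / (1 - ρ) ^ (m + 1)) := by
    apply hasSum_choose_mul_geometric_of_norm_lt_one
    rw [Real.norm_eq_abs, abs_of_pos hρ0]; exact hρ1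
  have hgs' := hgs.mul_left (q ^ N)
  have hle : ∀ n : ℕ,
      (if N < n then Real.Gamma (n + L) / (Real.Gamma L * Real.Gamma (n + 1)) * r ^ (2 * n)
        else 0) ≤ q ^ N * (((n + m).choose m : ℝ) * ρ ^ n) := by
    intro n
    by_cases h : N < n
    · rw [if_pos h]
      have hA := coeff_le_choose L hL m n hLm
      have h1 : 0 < Real.Gamma ((n:ℝ) + L) := Real.Gamma_pos_of_pos (by positivity)
      have h2 : 0 < Real.Gamma ((n:ℝ) + 1) := Real.Gamma_pos_of_pos (by positivity)
      have h3 : 0 < Real.Gamma L := Real.Gamma_pos_of_pos hL0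
      have hA0 : 0 ≤ Real.Gamma ((n:ℝ) + L) / (Real.Gamma L * Real.Gamma ((n:ℝ) + 1)) := by
        positivity
      have hsplit : r ^ (2 * n) = q ^ n * ρ ^ n := by
        rw [pow_mul, hq, div_pow, div_mul_cancel₀ _ (pow_ne_zero n hρ0.ne')]
      rw [hsplit, ← mul_assoc]
      have hqn : q ^ n ≤ q ^ N := pow_le_pow_of_le_one hq0.le hq1 (le_of_lt h)
      calc Real.Gamma ((n:ℝ) + L) / (Real.Gamma L * Real.Gamma ((n:ℝ) + 1)) * q ^ n * ρ ^ n
          ≤ ((n + m).choose m : ℝ) * q ^ N * ρ ^ n := by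
            apply mul_le_mul_of_nonneg_right _ (pow_nonneg hρ0.le n)
            exact mul_le_mul hA hqn (pow_nonneg hq0.le n) (Nat.cast_nonneg _)
        _ = q ^ N * (((n + m).choose m : ℝ) * ρ ^ n) := by ring
    · rw [if_neg h]; positivity
  have hf0 : ∀ n : ℕ,
      0 ≤ (if N < n then Real.Gamma (n + L) / (Real.Gamma L * Real.Gamma (n + 1)) * r ^ (2 * n)
        else 0) := by
    intro n
    by_cases h : N < n
    · rw [if_pos h]
      have h1 : 0 < Real.Gamma ((n:ℝ) + L) := Real.Gamma_pos_of_pos (by positivity)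
      have h2 : 0 < Real.Gamma ((n:ℝ) + 1) := Real.Gamma_pos_of_pos (by positivity)
      have h3 : 0 < Real.Gamma L := Real.Gamma_pos_of_pos hL0
      positivity
    · rw [if_neg h]
  have hfsum : Summable (fun n : ℕ ↦
      if N < n then Real.Gamma (n + L) / (Real.Gamma L * Real.Gamma (n + 1)) * r ^ (2 * n)
        else 0) :=
    Summable.of_nonneg_of_le hf0 hle hgs'.summable
  have hts : (∑' n : ℕ, if N < n
        then Real.Gamma (n + L) / (Real.Gamma L * Real.Gamma (n + 1)) * r ^ (2 * n) else 0)
      ≤ q ^ N * (1 / (1 - ρ) ^ (m + 1)) := by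
    rw [← hgs'.tsum_eq]
    exact Summable.tsum_le_tsum hle hfsum hgs'.summable
  refine le_trans hts ?_
  -- final arithmetic
  set c : ℝ := 1 - ε - δ / 4 with hcdef
  have hc0 : 0 < c := by rw [hcdef]; linarith
  have hc1 : c ≤ 1 := by rw [hcdef]; linarith
  have hqc : q ≤ 1 - c * δ := by
    have h04 : (0:ℝ) ≤ 1 - ε - δ / 4 := by linarith
    rw [hq, div_le_iff₀ hρ0, hr, hρ, hcdef]
    nlinarith [mul_nonneg (mul_nonneg h04 hε0.le) (sq_nonneg δ)]
  have hlogq : Real.log q ≤ -(c * δ) :=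
    le_trans (Real.log_le_sub_one_of_pos hq0) (by linarith)
  have hqN : q ^ N ≤ Real.exp (-((N:ℝ) * (c * δ))) := by
    have e1 : q ^ N = Real.exp ((N:ℝ) * Real.log q) := by
      rw [← Real.log_pow, Real.exp_log (pow_pos hq0 N)]
    rw [e1, Real.exp_le_exp]
    have h := mul_le_mul_of_nonneg_left hlogq (Nat.cast_nonneg N)
    nlinarith [h]
  have hX0 : 0 ≤ Real.log (1 / δ) := Real.log_nonneg (one_le_one_div hδ hδ1)
  have hNx : (2 * L / δ) * Real.log (1 / δ) - 1 ≤ (N:ℝ) :=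
    le_of_lt (Nat.sub_one_lt_floor _)
  have hcore : Real.exp (-((N:ℝ) * (c * δ))) ≤ Real.exp (c * δ) * δ ^ (2 * L * c) := by
    have h1 : ((2 * L / δ) * Real.log (1 / δ) - 1) * (c * δ) ≤ (N:ℝ) * (c * δ) :=
      mul_le_mul_of_nonneg_right hNx (by positivity)
    have h2 : ((2 * L / δ) * Real.log (1 / δ) - 1) * (c * δ)
        = 2 * L * c * Real.log (1 / δ) - c * δ := by
      field_simp
    have h3 : -((N:ℝ) * (c * δ)) ≤ c * δ - 2 * L * c * Real.log (1 / δ) := by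
      rw [h2] at h1; linarith
    calc Real.exp (-((N:ℝ) * (c * δ)))
        ≤ Real.exp (c * δ - 2 * L * c * Real.log (1 / δ)) := Real.exp_le_exp.mpr h3
      _ = Real.exp (c * δ) * Real.exp (-(2 * L * c * Real.log (1 / δ))) := by
          rw [← Real.exp_add]; ring_nf
      _ = Real.exp (c * δ) * δ ^ (2 * L * c) := by
          rw [Real.rpow_def_of_pos hδ]
          congr 1
          rw [one_div, Real.log_inv]; ring
  have hexp3 : Real.exp (c * δ) ≤ 3 := by
    have hcδ1 : c * δ ≤ 1 := by nlinarith
    calc Real.exp (c * δ) ≤ Real.exp 1 := Real.exp_le_exp.mpr hcδ1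
      _ ≤ 3 := by linarith [Real.exp_one_lt_d9]
  have h2Lc : (L - 1) + ((m:ℝ) + 1) ≤ 2 * L * c := by
    have e1 : 2 * L * ε = α / 4 := by rw [hεdef]; field_simp; ring
    have e2 : 2 * L * c = 2 * L - 2 * L * ε - L * δ / 2 := by rw [hcdef]; ring
    have e3 : α = L - (m:ℝ) := hαdef
    rw [e2, e1]
    linarith
  have hrpow : δ ^ (2 * L * c) ≤ δ ^ ((L - 1) + ((m:ℝ) + 1)) :=
    Real.rpow_le_rpow_of_exponent_ge hδ hδ1 h2Lc
  have hsplitρ : δ ^ ((L - 1) + ((m:ℝ) + 1)) = δ ^ (L - 1) * δ ^ (m + 1 : ℕ) := by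
    rw [Real.rpow_add hδ]
    congr 1
    rw [show ((m:ℝ) + 1) = ((m + 1 : ℕ) : ℝ) by push_cast; ring, Real.rpow_natCast]
  have h1ρ : 1 - ρ = ε * δ := by rw [hρ]; ring
  rw [h1ρ, mul_one_div, div_le_iff₀ (by positivity)]
  calc q ^ N ≤ Real.exp (-((N:ℝ) * (c * δ))) := hqN
    _ ≤ Real.exp (c * δ) * δ ^ (2 * L * c) := hcore
    _ ≤ 3 * (δ ^ (L - 1) * δ ^ (m + 1 : ℕ)) := by
        have h := mul_le_mul hexp3 hrpow (Real.rpow_nonneg hδ.le _) (by norm_num)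
        rw [hsplitρ] at h
        exact h
    _ = 3 / ε ^ (m + 1) * δ ^ (L - 1) * (ε * δ) ^ (m + 1) := by
        rw [mul_pow]
        field_simp
end

section
/- Let g be a Gaussian analytic function on the unit disk 𝔻 with sup_{z∈𝔻} E[|g(z)|²] ≤ σ². Then there exist universal constants c, C > 0 such that for every λ > 0, P[ max_{|z| ≤ 1/2} |g(z)| > λσ ] ≤ C e^{−cλ²}. -/
open MeasureTheory Real ProbabilityTheory Finset

/-!
For `‖z‖ ≤ 1/2` write `‖z‖ⁿ ≤ (3/4)ⁿ (2/3)ⁿ`. Cauchy–Schwarz and the hypothesis at radius `3/4`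
give `|g(z)| ≤ σ √Q` with `Q = Σ (4/9)ⁿ |ξₙ|²`, so the event lies in `{λ² < Q}`. Since
`E[exp(b|ξ|²)] = (1 - b)⁻¹` for a standard complex Gaussian, independence gives
`E[exp(Q/2)] = ∏ (1 - (4/9)ⁿ/2)⁻¹ ≤ exp(Σ (4/9)ⁿ) ≤ e²`, and Markov's inequality for
`exp(Q/2)` yields `P[λ² < Q] ≤ e² e^{-λ²/2}`.
-/

noncomputable def stdComplexGaussian : Measure ℂ :=
  volume.withDensity fun z : ℂ => ENNReal.ofReal ((1 / π) * exp (-‖z‖ ^ 2))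

theorem inv_one_sub_half_le_exp {a : ℝ} (ha0 : 0 ≤ a) (ha1 : a ≤ 1) :
    (1 - a / 2)⁻¹ ≤ exp a :=
  calc (1 - a / 2)⁻¹ ≤ 1 + a := by
        rw [inv_le_iff_one_le_mul₀ (by linarith)]; nlinarith
    _ ≤ exp a := by linarith [add_one_le_exp a]

theorem integrable_exp_neg_mul_norm_sq {b : ℝ} (hb : 0 < b) :
    Integrable fun z : ℂ => exp (-b * ‖z‖ ^ 2) := by
  convert (GaussianFourier.integrable_cexp_neg_mul_sq_norm_add
    (b := (b : ℂ)) (by simpa using hb) 0 (0 : ℂ)).norm using 2 with z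
  simp [Complex.norm_exp, ← Complex.ofReal_pow]

theorem lintegral_stdComplexGaussian_exp_mul_norm_sq {b : ℝ} (hb : b < 1) :
    ∫⁻ z, ENNReal.ofReal (exp (b * ‖z‖ ^ 2)) ∂stdComplexGaussian
      = ENNReal.ofReal (1 - b)⁻¹ := by
  have hpos : 0 < 1 - b := by linarith
  rw [stdComplexGaussian, lintegral_withDensity_eq_lintegral_mul _ (by fun_prop) (by fun_prop)]
  calc ∫⁻ z, (ENNReal.ofReal ((1 / π) * exp (-‖z‖ ^ 2)) * ENNReal.ofReal (exp (b * ‖z‖ ^ 2)))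
      = ∫⁻ z : ℂ, ENNReal.ofReal (π⁻¹ * exp (-(1 - b) * ‖z‖ ^ 2)) := by
        refine lintegral_congr fun z => ?_
        rw [← ENNReal.ofReal_mul (by positivity), mul_assoc, ← exp_add]
        ring_nf
    _ = ENNReal.ofReal (∫ z : ℂ, π⁻¹ * exp (-(1 - b) * ‖z‖ ^ 2)) :=
        (ofReal_integral_eq_lintegral_ofReal
          ((integrable_exp_neg_mul_norm_sq hpos).const_mul _)
          (ae_of_all _ fun _ => by positivity)).symm
    _ = ENNReal.ofReal (1 - b)⁻¹ := by
        rw [integral_const_mul, GaussianFourier.integral_rexp_neg_mul_sq_norm hpos,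
          Complex.finrank_real_complex]
        norm_num
        field_simp

theorem norm_tsum_mul_mul_pow_le {x c : ℕ → ℂ} {z : ℂ} {r s : ℝ} (hr : 0 ≤ r) (hs : 0 ≤ s)
    (hz : ‖z‖ ≤ r * s) (hc : Summable fun n => ‖c n‖ ^ 2 * r ^ (2 * n))
    (hx : Summable fun n => s ^ (2 * n) * ‖x n‖ ^ 2) :
    ‖∑' n, x n * c n * z ^ n‖
      ≤ √(∑' n, ‖c n‖ ^ 2 * r ^ (2 * n)) * √(∑' n, s ^ (2 * n) * ‖x n‖ ^ 2) := by
  set f : ℕ → ℝ := fun n => ‖c n‖ * r ^ n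
  set g : ℕ → ℝ := fun n => s ^ n * ‖x n‖
  have hf_sq : ∀ n, f n ^ (2 : ℝ) = ‖c n‖ ^ 2 * r ^ (2 * n) := fun n => by
    rw [rpow_two, pow_mul]; ring
  have hg_sq : ∀ n, g n ^ (2 : ℝ) = s ^ (2 * n) * ‖x n‖ ^ 2 := fun n => by
    rw [rpow_two, pow_mul]; ring
  have hterm : ∀ n, ‖x n * c n * z ^ n‖ ≤ f n * g n := fun n => by
    rw [norm_mul, norm_mul, norm_pow]
    calc ‖x n‖ * ‖c n‖ * ‖z‖ ^ n ≤ ‖x n‖ * ‖c n‖ * (r * s) ^ n := by gcongr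
      _ = f n * g n := by simp only [f, g, mul_pow]; ring
  obtain ⟨hfg, hcs⟩ := summable_and_inner_le_Lp_mul_Lq_tsum_of_nonneg
    Real.HolderConjugate.two_two (fun n => by positivity) (fun n => by positivity)
    (f := f) (g := g) (by simpa only [hf_sq] using hc) (by simpa only [hg_sq] using hx)
  simp only [hf_sq, hg_sq, ← sqrt_eq_rpow] at hcs
  have hnorm : Summable fun n => ‖x n * c n * z ^ n‖ :=
    hfg.of_nonneg_of_le (fun _ => norm_nonneg _) hterm
  calc ‖∑' n, x n * c n * z ^ n‖ ≤ ∑' n, ‖x n * c n * z ^ n‖ := norm_tsum_le_tsum_norm hnorm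
    _ ≤ ∑' n, f n * g n := hnorm.tsum_le_tsum hterm hfg
    _ ≤ _ := hcs

theorem exists_lt_sum_range_of_mul_lt_norm_tsum {x c : ℕ → ℂ} {z : ℂ} {r s σ lam : ℝ}
    (hr : 0 ≤ r) (hs : 0 ≤ s) (hσ : 0 ≤ σ) (hlam : 0 ≤ lam) (hz : ‖z‖ ≤ r * s)
    (hc : Summable fun n => ‖c n‖ ^ 2 * r ^ (2 * n))
    (hcσ : ∑' n, ‖c n‖ ^ 2 * r ^ (2 * n) ≤ σ ^ 2)
    (h : lam * σ < ‖∑' n, x n * c n * z ^ n‖) :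
    ∃ N, lam ^ 2 < ∑ n ∈ range N, s ^ (2 * n) * ‖x n‖ ^ 2 := by
  by_contra! hle
  have hx_nonneg : ∀ n, 0 ≤ s ^ (2 * n) * ‖x n‖ ^ 2 := fun n => by positivity
  have hx := summable_of_sum_range_le hx_nonneg hle
  have hc_le : √(∑' n, ‖c n‖ ^ 2 * r ^ (2 * n)) ≤ σ :=
    (sqrt_le_sqrt hcσ).trans_eq (sqrt_sq hσ)
  have hx_le : √(∑' n, s ^ (2 * n) * ‖x n‖ ^ 2) ≤ lam :=
    (sqrt_le_sqrt (Real.tsum_le_of_sum_range_le hx_nonneg hle)).trans_eq (sqrt_sq hlam)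
  have := (norm_tsum_mul_mul_pow_le hr hs hz hc hx).trans
    (mul_le_mul hc_le hx_le (sqrt_nonneg _) hσ)
  linarith

section

variable {Ω : Type*} [MeasurableSpace Ω] {P : Measure Ω}

theorem lintegral_exp_mul_norm_sq_le_of_map_eq {X : Ω → ℂ} (hX : Measurable X)
    (hmap : P.map X = stdComplexGaussian) {a : ℝ} (ha0 : 0 ≤ a) (ha1 : a ≤ 1) :
    ∫⁻ ω, ENNReal.ofReal (exp (a / 2 * ‖X ω‖ ^ 2)) ∂P ≤ ENNReal.ofReal (exp a) := by
  rw [← lintegral_map (f := fun z : ℂ => ENNReal.ofReal (exp (a / 2 * ‖z‖ ^ 2))) (by fun_prop) hX,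
    hmap, lintegral_stdComplexGaussian_exp_mul_norm_sq (by linarith)]
  exact ENNReal.ofReal_le_ofReal (inv_one_sub_half_le_exp ha0 ha1)

theorem lintegral_exp_sum_mul_norm_sq_le {ι : Type*} {ξ : ι → Ω → ℂ} (hξ : ∀ i, Measurable (ξ i))
    (hind : iIndepFun ξ P) (hmap : ∀ i, P.map (ξ i) = stdComplexGaussian)
    (s : Finset ι) {a : ι → ℝ} (ha0 : ∀ i, 0 ≤ a i) (ha1 : ∀ i, a i ≤ 1) :
    ∫⁻ ω, ENNReal.ofReal (exp ((∑ i ∈ s, a i * ‖ξ i ω‖ ^ 2) / 2)) ∂P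
      ≤ ENNReal.ofReal (exp (∑ i ∈ s, a i)) := by
  have hfactor : ∀ ω, ENNReal.ofReal (exp ((∑ i ∈ s, a i * ‖ξ i ω‖ ^ 2) / 2))
      = ∏ i ∈ s, ENNReal.ofReal (exp (a i / 2 * ‖ξ i ω‖ ^ 2)) := fun ω => by
    rw [← ENNReal.ofReal_prod_of_nonneg fun _ _ => (exp_pos _).le, ← exp_sum, sum_div]
    congr 2
    exact sum_congr rfl fun i _ => by ring
  simp_rw [hfactor]
  rw [lintegral_prod_eq_prod_lintegral_of_indepFun s
    (fun i ω => ENNReal.ofReal (exp (a i / 2 * ‖ξ i ω‖ ^ 2)))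
    (hind.comp (fun i z => ENNReal.ofReal (exp (a i / 2 * ‖z‖ ^ 2))) fun i => by fun_prop)
    fun i => by fun_prop, exp_sum, ENNReal.ofReal_prod_of_nonneg fun _ _ => (exp_pos _).le]
  exact prod_le_prod' fun i _ =>
    lintegral_exp_mul_norm_sq_le_of_map_eq (hξ i) (hmap i) (ha0 i) (ha1 i)

theorem measure_lt_le_exp_neg_mul_lintegral_exp {Y : Ω → ℝ} (hY : Measurable Y) (t : ℝ) :
    P {ω | t < Y ω} ≤ ENNReal.ofReal (exp (-t)) * ∫⁻ ω, ENNReal.ofReal (exp (Y ω)) ∂P := by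
  have hmarkov := mul_meas_ge_le_lintegral₀ (μ := P)
    (f := fun ω => ENNReal.ofReal (exp (Y ω))) (by fun_prop) (ENNReal.ofReal (exp t))
  calc P {ω | t < Y ω}
      ≤ ENNReal.ofReal (exp (-t)) * (ENNReal.ofReal (exp t) *
          P {ω | ENNReal.ofReal (exp t) ≤ ENNReal.ofReal (exp (Y ω))}) := by
        rw [← mul_assoc, ← ENNReal.ofReal_mul (exp_pos _).le, ← exp_add, neg_add_cancel,
          exp_zero, ENNReal.ofReal_one, one_mul]
        exact measure_mono fun ω hω => ENNReal.ofReal_le_ofReal (exp_le_exp.2 hω.le)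
    _ ≤ _ := by gcongr

theorem measure_lt_sum_mul_norm_sq_le {ι : Type*} {ξ : ι → Ω → ℂ} (hξ : ∀ i, Measurable (ξ i))
    (hind : iIndepFun ξ P) (hmap : ∀ i, P.map (ξ i) = stdComplexGaussian)
    (s : Finset ι) {a : ι → ℝ} (ha0 : ∀ i, 0 ≤ a i) (ha1 : ∀ i, a i ≤ 1) (t : ℝ) :
    P {ω | t < ∑ i ∈ s, a i * ‖ξ i ω‖ ^ 2} ≤ ENNReal.ofReal (exp (∑ i ∈ s, a i - t / 2)) :=
  calc P {ω | t < ∑ i ∈ s, a i * ‖ξ i ω‖ ^ 2}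
      = P {ω | t / 2 < (∑ i ∈ s, a i * ‖ξ i ω‖ ^ 2) / 2} := by
        simp only [div_lt_div_iff_of_pos_right (two_pos : (0 : ℝ) < 2)]
    _ ≤ ENNReal.ofReal (exp (-(t / 2))) *
          ∫⁻ ω, ENNReal.ofReal (exp ((∑ i ∈ s, a i * ‖ξ i ω‖ ^ 2) / 2)) ∂P :=
        measure_lt_le_exp_neg_mul_lintegral_exp (by fun_prop) _
    _ ≤ ENNReal.ofReal (exp (-(t / 2))) * ENNReal.ofReal (exp (∑ i ∈ s, a i)) := by
        gcongr
        exact lintegral_exp_sum_mul_norm_sq_le hξ hind hmap s ha0 ha1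
    _ = ENNReal.ofReal (exp (∑ i ∈ s, a i - t / 2)) := by
        rw [← ENNReal.ofReal_mul (exp_pos _).le, ← exp_add, neg_add_eq_sub]

end

/-- Lemma 2.4.4 of Hough–Krishnapur–Peres–Virág: if g(z) = Σ ξₙ cₙ zⁿ is a Gaussian
analytic function on the unit disk with sup_{𝔻} E[|g|²] ≤ σ² (equivalently
Σ|cₙ|²|z|^{2n} ≤ σ² on 𝔻), then there are universal constants c, C > 0 with
P[max_{|z|≤1/2} |g(z)| > λσ] ≤ C e^{−cλ²} for every λ > 0. -/
theorem hole_prob_stmt_17 :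
    ∃ c > (0 : ℝ), ∃ C > (0 : ℝ),
      ∀ (Ω : Type) (_ : MeasurableSpace Ω) (P : Measure Ω) (_ : IsProbabilityMeasure P)
        (ξ : ℕ → Ω → ℂ), (∀ n, Measurable (ξ n)) →
        iIndepFun ξ P →
        (∀ n, Measure.map (ξ n) P
          = volume.withDensity (fun z : ℂ => ENNReal.ofReal ((1 / π) * Real.exp (-‖z‖ ^ 2)))) →
        ∀ (coef : ℕ → ℂ),
        (∀ r : ℝ, 0 ≤ r → r < 1 → Summable (fun n : ℕ => ‖coef n‖ ^ 2 * r ^ (2 * n))) →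
        ∀ (σ : ℝ), 0 < σ →
        (∀ z : ℂ, ‖z‖ < 1 → (∑' n : ℕ, ‖coef n‖ ^ 2 * ‖z‖ ^ (2 * n)) ≤ σ ^ 2) →
        ∀ (lam : ℝ), 0 < lam →
        P {ω | ∃ z : ℂ, ‖z‖ ≤ 1 / 2 ∧ lam * σ < ‖∑' n : ℕ, ξ n ω * coef n * z ^ n‖}
          ≤ ENNReal.ofReal (C * Real.exp (-c * lam ^ 2)) := by
  refine ⟨1 / 2, by norm_num, exp 2, exp_pos 2, ?_⟩
  intro Ω _ P _ ξ hξ hind hmap coef hsumm σ hσ hbound lam hlam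
  have hc := hsumm (3 / 4) (by norm_num) (by norm_num)
  have hcσ : ∑' n, ‖coef n‖ ^ 2 * (3 / 4 : ℝ) ^ (2 * n) ≤ σ ^ 2 := by
    simpa using hbound (3 / 4 : ℝ) (by norm_num)
  set Q : ℕ → Ω → ℝ := fun N ω => ∑ n ∈ range N, (2 / 3 : ℝ) ^ (2 * n) * ‖ξ n ω‖ ^ 2
  have hQ_mono : Monotone fun N => {ω | lam ^ 2 < Q N ω} :=
    fun N M hNM ω (hω : lam ^ 2 < Q N ω) => show lam ^ 2 < Q M ω from
      hω.trans_le (sum_le_sum_of_subset_of_nonneg (range_subset_range.2 hNM)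
        fun _ _ _ => by positivity)
  have hweights : ∀ N, ∑ n ∈ range N, (2 / 3 : ℝ) ^ (2 * n) ≤ 2 := fun N => by
    simp only [pow_mul, range_eq_Ico]
    exact (geom_sum_Ico_le_of_lt_one (by norm_num) (by norm_num)).trans (by norm_num)
  have htail :
      ∀ N, P {ω | lam ^ 2 < Q N ω} ≤ ENNReal.ofReal (exp 2 * exp (-(1 / 2) * lam ^ 2)) :=
    fun N => (measure_lt_sum_mul_norm_sq_le hξ hind hmap (range N) (fun n => by positivity)
      (fun n => pow_le_one₀ (by norm_num) (by norm_num)) _).trans <|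
        ENNReal.ofReal_le_ofReal <| by
          rw [← exp_add]
          exact exp_le_exp.2 (by linarith [hweights N])
  calc P {ω | ∃ z : ℂ, ‖z‖ ≤ 1 / 2 ∧ lam * σ < ‖∑' n : ℕ, ξ n ω * coef n * z ^ n‖}
      ≤ P (⋃ N, {ω | lam ^ 2 < Q N ω}) := measure_mono fun ω ⟨z, hz, hlt⟩ =>
        Set.mem_iUnion.2 <| exists_lt_sum_range_of_mul_lt_norm_tsum (by norm_num) (by norm_num)
          hσ.le hlam.le (hz.trans_eq (by norm_num)) hc hcσ hlt
    _ = ⨆ N, P {ω | lam ^ 2 < Q N ω} := hQ_mono.measure_iUnion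
    _ ≤ _ := iSup_le htail
end

section
/- Let F be an analytic function on a neighbourhood of the closed disk of radius r < 1 which has no zeros in the open disk of radius r. Suppose max_{|z|=r} log|F| ≤ 3 log σ and that there exists w with |w| = 1−2δ (where δ = 1−r, 0 < δ ≤ 1/4) such that log|F(w)| ≥ −(log σ)², for some σ ≥ e. Then for every γ with 1 < γ ≤ 1/δ, min_{|z| ≤ (1−γδ)} log|F(z)| ≥ −(C/((γ−1)δ²)) (log σ)² for a universal constant C > 0. -/
/-!
Since `F` has no zeros in the disk of radius `r`, `u = 3 log σ - log |F|` is harmonic there, and it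
is nonnegative by the maximum modulus principle. Harnack's inequality, read off from the Poisson
formula and the kernel bounds `(R - |w|)/(R + |w|) ≤ P ≤ (R + |w|)/(R - |w|)`, applied on a disk
of radius `ρ < r` and passing through the centre, gives `u z ≤ (4 / ((γ - 1) δ)) (4 / δ) u w`,
while `u w ≤ 3 log σ + (log σ)² ≤ 4 (log σ)²` by the assumption at `w`.
-/

open Metric Real InnerProductSpace

namespace InnerProductSpace.HarmonicOnNhd

variable {u : ℂ → ℝ} {c w : ℂ} {R : ℝ}

theorem circleIntegrable_re_herglotzRieszKernel_smul (hu : HarmonicOnNhd u (closedBall c R))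
    (hw : w ∈ ball c R) :
    CircleIntegrable ((Complex.re ∘ herglotzRieszKernel c w) • u) c R := by
  refine ContinuousOn.circleIntegrable (pos_of_mem_ball hw).le (ContinuousOn.smul ?_ ?_)
  · have hne : ∀ z ∈ sphere c R, z - c - (w - c) ≠ 0 := by
      intro z hz h
      rw [sub_sub_sub_cancel_right, sub_eq_zero] at h
      subst h
      exact (mem_ball.1 hw).ne (mem_sphere.1 hz)
    simp only [herglotzRieszKernel_fun_def]
    fun_prop (disch := assumption)
  · exact hu.continuousOn.mono sphere_subset_closedBall

theorem circleAverage_const_smul (hu : HarmonicOnNhd u (closedBall c R)) (hR : 0 ≤ R) (a : ℝ) :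
    circleAverage (a • u) c R = a * u c := by
  have hu' : HarmonicOnNhd u (closedBall c |R|) := by rwa [abs_of_nonneg hR]
  rw [circleAverage_smul, hu'.circleAverage_eq, smul_eq_mul]

theorem circleIntegrable_const_smul (hu : HarmonicOnNhd u (closedBall c R)) (hR : 0 ≤ R)
    (a : ℝ) :
    CircleIntegrable (a • u) c R :=
  ((hu.continuousOn.mono sphere_subset_closedBall).circleIntegrable hR).const_smul

theorem harnack_apply_le (hu : HarmonicOnNhd u (closedBall c R))
    (hu₀ : ∀ z ∈ sphere c R, 0 ≤ u z) (hw : w ∈ ball c R) :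
    u w ≤ (R + ‖w - c‖) / (R - ‖w - c‖) * u c := by
  have hR : 0 < R := pos_of_mem_ball hw
  calc u w = circleAverage ((Complex.re ∘ herglotzRieszKernel c w) • u) c R :=
        (hu.circleAverage_re_herglotzRieszKernel_smul hw).symm
    _ ≤ circleAverage (((R + ‖w - c‖) / (R - ‖w - c‖)) • u) c R := by
      refine circleAverage_mono (hu.circleIntegrable_re_herglotzRieszKernel_smul hw)
        (hu.circleIntegrable_const_smul hR.le _) fun z hz => ?_
      rw [abs_of_pos hR] at hz
      exact mul_le_mul_of_nonneg_right (re_herglotzRieszKernel_le hz hw) (hu₀ z hz)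
    _ = (R + ‖w - c‖) / (R - ‖w - c‖) * u c := hu.circleAverage_const_smul hR.le _

theorem harnack_apply_center_le (hu : HarmonicOnNhd u (closedBall c R))
    (hu₀ : ∀ z ∈ sphere c R, 0 ≤ u z) (hw : w ∈ ball c R) :
    u c ≤ (R + ‖w - c‖) / (R - ‖w - c‖) * u w := by
  have hR : 0 < R := pos_of_mem_ball hw
  have hwR : ‖w - c‖ < R := mem_ball_iff_norm.1 hw
  have hlower : (R - ‖w - c‖) / (R + ‖w - c‖) * u c ≤ u w := calc
    _ = circleAverage (((R - ‖w - c‖) / (R + ‖w - c‖)) • u) c R :=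
      (hu.circleAverage_const_smul hR.le _).symm
    _ ≤ circleAverage ((Complex.re ∘ herglotzRieszKernel c w) • u) c R := by
      refine circleAverage_mono (hu.circleIntegrable_const_smul hR.le _)
        (hu.circleIntegrable_re_herglotzRieszKernel_smul hw) fun z hz => ?_
      rw [abs_of_pos hR] at hz
      exact mul_le_mul_of_nonneg_right (le_re_herglotzRieszKernel hz hw) (hu₀ z hz)
    _ = u w := hu.circleAverage_re_herglotzRieszKernel_smul hw
  have hk : 0 < (R - ‖w - c‖) / (R + ‖w - c‖) := div_pos (by linarith) (by positivity)
  calc u c ≤ u w / ((R - ‖w - c‖) / (R + ‖w - c‖)) := (le_div_iff₀' hk).2 hlower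
    _ = (R + ‖w - c‖) / (R - ‖w - c‖) * u w := by field_simp

end InnerProductSpace.HarmonicOnNhd

theorem DiffContOnCl.log_norm_le_of_forall_mem_sphere {E : Type*} [NormedAddCommGroup E]
    [NormedSpace ℂ E] {F : ℂ → E} {c z : ℂ} {r M : ℝ}
    (hF : DiffContOnCl ℂ F (ball c r)) (hM : ∀ ζ ∈ sphere c r, log ‖F ζ‖ ≤ M)
    (hz : z ∈ ball c r) (hFz : F z ≠ 0) : log ‖F z‖ ≤ M := by
  have hr : r ≠ 0 := (pos_of_mem_ball hz).ne'
  refine (log_le_iff_le_exp (norm_pos_iff.2 hFz)).2 <|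
    Complex.norm_le_of_forall_mem_frontier_norm_le isBounded_ball hF (fun ζ hζ => ?_)
      (subset_closure hz)
  rw [frontier_ball c hr] at hζ
  rcases eq_or_ne (F ζ) 0 with hFζ | hFζ
  · simpa [hFζ] using (exp_pos M).le
  · calc ‖F ζ‖ = exp (log ‖F ζ‖) := (exp_log (norm_pos_iff.2 hFζ)).symm
      _ ≤ exp M := exp_le_exp.2 (hM ζ hζ)

theorem DifferentiableOn.harmonicOnNhd_log_norm {F : ℂ → ℂ} {U : Set ℂ}
    (hF : DifferentiableOn ℂ F U) (hU : IsOpen U) (hF₀ : ∀ ζ ∈ U, F ζ ≠ 0) :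
    HarmonicOnNhd (fun ζ => Real.log ‖F ζ‖) U := fun ζ hζ =>
  (hF.analyticAt (hU.mem_nhds hζ)).harmonicAt_log_norm (hF₀ ζ hζ)

theorem DiffContOnCl.sub_log_norm_le_mul {F : ℂ → ℂ} {c z w : ℂ} {r ρ M : ℝ}
    (hF : DiffContOnCl ℂ F (ball c r)) (hF₀ : ∀ ζ ∈ ball c r, F ζ ≠ 0)
    (hM : ∀ ζ ∈ sphere c r, log ‖F ζ‖ ≤ M) (hρ : ρ < r) (hz : z ∈ ball c ρ)
    (hw : w ∈ ball c ρ) :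
    M - log ‖F z‖ ≤ (ρ + ‖z - c‖) / (ρ - ‖z - c‖) *
      ((ρ + ‖w - c‖) / (ρ - ‖w - c‖) * (M - log ‖F w‖)) := by
  have hsub : closedBall c ρ ⊆ ball c r := closedBall_subset_ball hρ
  set u : ℂ → ℝ := fun ζ => M - log ‖F ζ‖
  have hu : HarmonicOnNhd u (closedBall c ρ) := fun ζ hζ =>
    (harmonicAt_const M).sub
      (hF.differentiableOn.harmonicOnNhd_log_norm isOpen_ball hF₀ ζ (hsub hζ))
  have hu₀ : ∀ ζ ∈ sphere c ρ, 0 ≤ u ζ := fun ζ hζ => by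
    have hζ' := hsub (sphere_subset_closedBall hζ)
    exact sub_nonneg.2 (hF.log_norm_le_of_forall_mem_sphere hM hζ' (hF₀ ζ hζ'))
  have hKz : 0 ≤ (ρ + ‖z - c‖) / (ρ - ‖z - c‖) := by
    have := mem_ball_iff_norm.1 hz
    exact div_nonneg (by linarith [norm_nonneg (z - c)]) (by linarith)
  exact (hu.harnack_apply_le hu₀ hz).trans
    (mul_le_mul_of_nonneg_left (hu.harnack_apply_center_le hu₀ hw) hKz)

theorem DiffContOnCl.sub_log_norm_le_div_sq {F : ℂ → ℂ} {z w : ℂ} {δ γ M : ℝ}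
    (hF : DiffContOnCl ℂ F (ball 0 (1 - δ))) (hF₀ : ∀ ζ ∈ ball 0 (1 - δ), F ζ ≠ 0)
    (hM : ∀ ζ ∈ sphere 0 (1 - δ), log ‖F ζ‖ ≤ M) (hδ : 0 < δ) (hγ : 1 < γ)
    (hw : ‖w‖ = 1 - 2 * δ) (hz : ‖z‖ ≤ 1 - γ * δ) :
    M - log ‖F z‖ ≤ 16 / ((γ - 1) * δ ^ 2) * (M - log ‖F w‖) := by
  -- an intermediate radius leaving room `δ / 2` around `w` and `(γ - 1) δ / 2` around `z`
  set t := min (γ - 1) 1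
  have ht₀ : 0 < t * δ := mul_pos (lt_min (by linarith) one_pos) hδ
  have htγ : t * δ ≤ (γ - 1) * δ := mul_le_mul_of_nonneg_right (min_le_left _ _) hδ.le
  have ht₁ : t * δ ≤ δ :=
    (mul_le_mul_of_nonneg_right (min_le_right _ _) hδ.le).trans_eq (one_mul δ)
  set ρ := 1 - δ - t * δ / 2 with hρ_def
  have hρ : ρ < 1 - δ := by linarith
  have hwρ : δ / 2 ≤ ρ - ‖w‖ := by linarith
  have hzρ : (γ - 1) * δ / 2 ≤ ρ - ‖z‖ := by linarith
  have hwρ' : w ∈ ball 0 ρ := mem_ball_zero_iff.2 (by linarith)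
  have hzρ' : z ∈ ball 0 ρ := mem_ball_zero_iff.2 (by linarith)
  have hKw : (ρ + ‖w‖) / (ρ - ‖w‖) ≤ 2 / (δ / 2) :=
    div_le_div₀ zero_le_two (by linarith) (by positivity) hwρ
  have hKz : (ρ + ‖z‖) / (ρ - ‖z‖) ≤ 2 / ((γ - 1) * δ / 2) :=
    div_le_div₀ zero_le_two (by linarith) (by linarith) hzρ
  have huw : 0 ≤ M - log ‖F w‖ := by
    have hw' : w ∈ ball 0 (1 - δ) := ball_subset_ball hρ.le hwρ'
    exact sub_nonneg.2 (hF.log_norm_le_of_forall_mem_sphere hM hw' (hF₀ w hw'))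
  have hKw₀ : 0 ≤ (ρ + ‖w‖) / (ρ - ‖w‖) :=
    div_nonneg (by linarith [norm_nonneg w]) (by linarith)
  have harnack := hF.sub_log_norm_le_mul hF₀ hM hρ hzρ' hwρ'
  simp only [sub_zero] at harnack
  calc M - log ‖F z‖ ≤ _ := harnack
    _ ≤ 2 / ((γ - 1) * δ / 2) * (2 / (δ / 2) * (M - log ‖F w‖)) := by gcongr
    _ = 16 / ((γ - 1) * δ ^ 2) * (M - log ‖F w‖) := by field_simp; ring

/-- If F is analytic in a neighbourhood of the closed disk of radius r = 1 − δ
(0 < δ ≤ 1/4), zero-free in the open disk of radius r, max_{|z|=r} log|F| ≤ 3 log σ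
(σ ≥ e) and log|F(w)| ≥ −(log σ)² for some |w| = 1 − 2δ, then for all 1 < γ ≤ 1/δ,
log|F| ≥ −(C/((γ−1)δ²))(log σ)² on the disk of radius 1 − γδ, C universal. -/
theorem hole_prob_stmt_18 :
    ∃ C > (0 : ℝ), ∀ (δ : ℝ), 0 < δ → δ ≤ 1 / 4 → ∀ (r : ℝ), r = 1 - δ →
      ∀ (F : ℂ → ℂ),
      (∃ U : Set ℂ, IsOpen U ∧ closedBall (0 : ℂ) r ⊆ U ∧ DifferentiableOn ℂ F U) →
      (∀ z ∈ ball (0 : ℂ) r, F z ≠ 0) →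
      ∀ (σ : ℝ), Real.exp 1 ≤ σ →
      (∀ z : ℂ, ‖z‖ = r → Real.log ‖F z‖ ≤ 3 * Real.log σ) →
      (∃ w : ℂ, ‖w‖ = 1 - 2 * δ ∧ Real.log ‖F w‖ ≥ -(Real.log σ) ^ 2) →
      ∀ (γ : ℝ), 1 < γ → γ ≤ 1 / δ →
      ∀ z : ℂ, ‖z‖ ≤ 1 - γ * δ →
        Real.log ‖F z‖ ≥ -(C / ((γ - 1) * δ ^ 2)) * (Real.log σ) ^ 2 := by
  refine ⟨64, by norm_num, ?_⟩
  rintro δ hδ - r rfl F ⟨U, -, hUr, hFU⟩ hF₀ σ hσ hM ⟨w, hw, hFw⟩ γ hγ - z hz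
  have hlogσ : 1 ≤ log σ := (le_log_iff_exp_le ((exp_pos 1).trans_le hσ)).2 hσ
  have hharnack := (hFU.diffContOnCl_ball hUr).sub_log_norm_le_div_sq hF₀
    (fun ζ hζ => hM ζ (mem_sphere_zero_iff_norm.1 hζ)) hδ hγ hw hz
  have hFw' : 3 * log σ - log ‖F w‖ ≤ 4 * log σ ^ 2 := by nlinarith
  have hK : 0 ≤ 16 / ((γ - 1) * δ ^ 2) := div_nonneg (by norm_num) (by nlinarith)
  calc log ‖F z‖
      ≥ 3 * log σ - 16 / ((γ - 1) * δ ^ 2) * (3 * log σ - log ‖F w‖) := by linarith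
    _ ≥ 3 * log σ - 16 / ((γ - 1) * δ ^ 2) * (4 * log σ ^ 2) := by gcongr
    _ = 3 * log σ - 64 / ((γ - 1) * δ ^ 2) * log σ ^ 2 := by ring
    _ ≥ -(64 / ((γ - 1) * δ ^ 2)) * log σ ^ 2 := by linarith
end
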